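/- arXiv:2603.25988 — 8 statements merged into one kernel-verified Lean document; each statement's English description precedes it below -/
import Mathlib

section
/- Let P ⊆ ℝ^m be nonempty and logarithmically dense in a cone H ⊆ ℝ^m (i.e., for every unit vector φ ∈ H and every ε > 0, the set of norms ‖p‖ of points p ∈ P with ‖p/‖p‖ − φ‖ < ε contains an unbounded increasing sequence (s_k) with s_{k+1}/s_k → 1), and let Q ⊆ ℝ^n \ {0} be unbounded. Then the set { p/‖q‖ : p ∈ P, q ∈ Q } is dense in H. -/
open Filter

/-- `P` is logarithmically dense along the unit vector `φ`: for every `ε > 0` the set of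
norms `‖p‖` of points `p ∈ P` with `‖p/‖p‖ - φ‖ < ε` contains an unbounded sequence
`s` with `s (k+1) / s k → 1`. -/
def LogDenseAlong {E : Type*} [NormedAddCommGroup E] [NormedSpace ℝ E]
    (P : Set E) (φ : E) : Prop :=
  ∀ ε > (0 : ℝ), ∃ s : ℕ → ℝ,
    (∀ k, ∃ p ∈ P, ‖(‖p‖⁻¹ : ℝ) • p - φ‖ < ε ∧ ‖p‖ = s k) ∧
    Tendsto s atTop atTop ∧
    Tendsto (fun k => s (k + 1) / s k) atTop (nhds 1)

theorem stmt0 {m n : ℕ}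
    (P H : Set (EuclideanSpace ℝ (Fin m)))
    (Q : Set (EuclideanSpace ℝ (Fin n)))
    (hPne : P.Nonempty)
    (hcone : ∀ c : ℝ, 0 ≤ c → ∀ x ∈ H, c • x ∈ H)
    (hlog : ∀ φ : EuclideanSpace ℝ (Fin m), ‖φ‖ = 1 → φ ∈ H → LogDenseAlong P φ)
    (hQ0 : (0 : EuclideanSpace ℝ (Fin n)) ∉ Q)
    (hQunb : ∀ C : ℝ, ∃ q ∈ Q, C < ‖q‖) :
    H ⊆ closure {x : EuclideanSpace ℝ (Fin m) |
      ∃ p ∈ P, ∃ q ∈ Q, x = (‖q‖⁻¹ : ℝ) • p} := by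
  intro x hx
  rw [Metric.mem_closure_iff]
  intro δ hδ
  rcases eq_or_ne x 0 with rfl | hx0
  · -- x = 0
    obtain ⟨p₀, hp₀⟩ := hPne
    obtain ⟨q, hqQ, hq⟩ := hQunb (max 1 (‖p₀‖ * 2 / δ))
    refine ⟨_, ⟨p₀, hp₀, q, hqQ, rfl⟩, ?_⟩
    have hq1 : (1:ℝ) < ‖q‖ := lt_of_le_of_lt (le_max_left _ _) hq
    have hq0 : (0:ℝ) < ‖q‖ := by linarith
    have h2 : ‖p₀‖ * 2 / δ < ‖q‖ := lt_of_le_of_lt (le_max_right _ _) hq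
    rw [div_lt_iff₀ hδ] at h2
    rw [dist_comm, dist_zero_right, norm_smul, norm_inv, norm_norm,
      inv_mul_lt_iff₀ hq0]
    nlinarith [norm_nonneg p₀]
  · -- x ≠ 0
    have hr : (0:ℝ) < ‖x‖ := norm_pos_iff.mpr hx0
    set r : ℝ := ‖x‖ with hrdef
    set φ : EuclideanSpace ℝ (Fin m) := (r⁻¹ : ℝ) • x with hφdef
    have hφ1 : ‖φ‖ = 1 := by
      rw [hφdef, norm_smul, norm_inv, Real.norm_eq_abs, abs_of_pos hr,
        inv_mul_cancel₀ hr.ne']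
    have hφH : φ ∈ H := hcone _ (inv_nonneg.mpr hr.le) x hx
    have hxφ : x = r • φ := by
      rw [hφdef, smul_smul, mul_inv_cancel₀ hr.ne', one_smul]
    set η : ℝ := min 1 (δ / (4 * r)) with hηdef
    have hη0 : 0 < η := lt_min one_pos (div_pos hδ (by linarith))
    have hη1 : η ≤ 1 := min_le_left _ _
    have hη2 : η * (4 * r) ≤ δ := by
      have := min_le_right 1 (δ / (4 * r))
      calc η * (4 * r) ≤ δ / (4 * r) * (4 * r) := by nlinarith
        _ = δ := by field_simp
    obtain ⟨s, hs1, hs2, hs3⟩ := hlog φ hφ1 hφH η hη0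
    obtain ⟨K₀, hK₀⟩ := eventually_atTop.mp
      (hs3.eventually_lt_const (show (1:ℝ) < 1 + η by linarith))
    obtain ⟨K₁, hK₁⟩ := eventually_atTop.mp (hs2.eventually_gt_atTop 0)
    set K := max K₀ K₁ with hKdef
    obtain ⟨q, hqQ, hq⟩ := hQunb (max 0 (s K / r))
    have hq0 : (0:ℝ) < ‖q‖ := lt_of_le_of_lt (le_max_left _ _) hq
    have hsKq : s K < r * ‖q‖ := by
      have := lt_of_le_of_lt (le_max_right _ _) hq
      rwa [div_lt_iff₀ hr, mul_comm] at this
    set c : ℝ := r * ‖q‖ with hcdef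
    have hc0 : 0 < c := mul_pos hr hq0
    have hex : ∃ j, c < s (K + j) := by
      obtain ⟨N, hN⟩ := eventually_atTop.mp (hs2.eventually_gt_atTop c)
      exact ⟨N, hN _ (Nat.le_add_left _ _)⟩
    set j := Nat.find hex with hjdef
    have hj : c < s (K + j) := Nat.find_spec hex
    have hj0 : j ≠ 0 := by
      intro h
      rw [h] at hj
      simp only [Nat.add_zero] at hj
      exact absurd hj (not_lt.mpr hsKq.le)
    have hjm : ¬ c < s (K + (j - 1)) := Nat.find_min hex (by omega)
    have ha : s (K + (j - 1)) ≤ c := not_lt.mp hjm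
    have ha0 : 0 < s (K + (j - 1)) :=
      hK₁ _ (le_trans (le_max_right _ _) (Nat.le_add_right _ _))
    have hratio : s (K + (j - 1) + 1) / s (K + (j - 1)) < 1 + η :=
      hK₀ _ (le_trans (le_max_left _ _) (Nat.le_add_right _ _))
    have hstep : K + (j - 1) + 1 = K + j := by omega
    rw [hstep] at hratio
    have hsk : s (K + j) < (1 + η) * c := by
      rw [div_lt_iff₀ ha0] at hratio
      nlinarith
    obtain ⟨p, hpP, hpφ, hpn⟩ := hs1 (K + j)
    refine ⟨_, ⟨p, hpP, q, hqQ, rfl⟩, ?_⟩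
    have hp0 : (0:ℝ) < ‖p‖ := by rw [hpn]; exact lt_trans hc0 hj
    set u : EuclideanSpace ℝ (Fin m) := (‖p‖⁻¹ : ℝ) • p with hudef
    set t : ℝ := ‖p‖ / ‖q‖ with htdef
    have ht0 : 0 < t := div_pos hp0 hq0
    have htr : r < t := by
      rw [htdef, lt_div_iff₀ hq0, hpn]
      calc r * ‖q‖ = c := rfl
        _ < s (K + j) := hj
    have htu : t < (1 + η) * r := by
      rw [htdef, div_lt_iff₀ hq0, hpn]
      calc s (K + j) < (1 + η) * c := hsk
        _ = (1 + η) * r * ‖q‖ := by rw [hcdef]; ring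
    have hpq : (‖q‖⁻¹ : ℝ) • p = t • u := by
      rw [hudef, htdef, smul_smul]
      congr 1
      field_simp
    have hkey : x - (‖q‖⁻¹ : ℝ) • p = (r - t) • φ + t • (φ - u) := by
      rw [hpq, hxφ]
      module
    rw [dist_eq_norm, hkey]
    have hun : ‖φ - u‖ < η := by rw [norm_sub_rev]; exact hpφ
    calc ‖(r - t) • φ + t • (φ - u)‖
        ≤ ‖(r - t) • φ‖ + ‖t • (φ - u)‖ := norm_add_le _ _
      _ = |r - t| + |t| * ‖φ - u‖ := by
          rw [norm_smul, hφ1, mul_one, norm_smul, Real.norm_eq_abs, Real.norm_eq_abs]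
      _ = (t - r) + t * ‖φ - u‖ := by
          rw [abs_of_neg (by linarith : r - t < 0), abs_of_pos ht0]; ring
      _ < δ := by nlinarith [norm_nonneg (φ - u)]
end

section
/- Let P ⊆ ℝ^m and φ ∈ S^{m−1}. Then P is logarithmically dense along φ if and only if for every ε > 0 there exists C° > 0 such that for all C ≥ C° there exists p ∈ P with ‖p − Cφ‖ < Cε. -/
open Filter

/-!
If `s_{k+1}/s_k → 1` and `s_k → ∞`, every large `C` lies in some `[s_k, (1 + δ) s_k)`; the point
of `P` of norm `s_k` pointing almost along `φ` is then within `C ε` of `C φ`. Conversely, choosing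
for each `k` a point `p_k ∈ P` nearly closest to `k φ` gives `p_k / k → φ`, so `‖p_k‖ ~ k`, which
makes `s_k = ‖p_k‖` logarithmically dense with directions tending to `φ`.
-/

open Topology

section RealSequence

variable {s : ℕ → ℝ}

theorem exists_le_and_lt_one_add_mul_of_tendsto_succ_div (hs : Tendsto s atTop atTop)
    (hratio : Tendsto (fun k => s (k + 1) / s k) atTop (𝓝 1)) {δ : ℝ} (hδ : 0 < δ) :
    ∃ C₀ > (0 : ℝ), ∀ C ≥ C₀, ∃ k, 0 < s k ∧ s k ≤ C ∧ C < (1 + δ) * s k := by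
  obtain ⟨K, hK⟩ := eventually_atTop.mp <|
    (hratio.eventually (gt_mem_nhds (lt_add_of_pos_right 1 hδ))).and (hs.eventually_gt_atTop 0)
  refine ⟨max (s K) 1, one_pos.trans_le (le_max_right _ _), fun C hC => ?_⟩
  -- `k` is the last index from `K` on with `s k ≤ C`.
  have hex : ∃ n, C < s (n + K) :=
    ((tendsto_add_atTop_iff_nat K).mpr hs |>.eventually_gt_atTop C).exists
  have hn : Nat.find hex ≠ 0 := fun h0 => by
    have := Nat.find_spec hex
    rw [h0, zero_add] at this
    linarith [le_max_left (s K) 1]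
  set n := Nat.find hex
  obtain ⟨hstep, hpos⟩ := hK (n - 1 + K) le_add_self
  have hnext : n - 1 + K + 1 = n + K := by omega
  have hle : s (n - 1 + K) ≤ C := not_lt.mp (Nat.find_min hex (Nat.sub_one_lt hn))
  refine ⟨n - 1 + K, hpos, hle, ?_⟩
  calc C < s (n + K) := Nat.find_spec hex
    _ < (1 + δ) * s (n - 1 + K) := by rwa [← hnext, ← div_lt_iff₀ hpos]

theorem Filter.Tendsto.atTop_of_div_natCast {c : ℝ}
    (hs : Tendsto (fun k : ℕ => s k / k) atTop (𝓝 c)) (hc : 0 < c) : Tendsto s atTop atTop := by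
  refine (hs.pos_mul_atTop hc tendsto_natCast_atTop_atTop).congr' ?_
  filter_upwards [eventually_ne_atTop 0] with k hk
  field_simp

theorem Filter.Tendsto.succ_div_of_div_natCast {c : ℝ}
    (hs : Tendsto (fun k : ℕ => s k / k) atTop (𝓝 c)) (hc : c ≠ 0) :
    Tendsto (fun k => s (k + 1) / s k) atTop (𝓝 1) := by
  have hsucc : Tendsto (fun k : ℕ => s (k + 1) / (k + 1)) atTop (𝓝 c) := by
    simpa using (tendsto_add_atTop_iff_nat 1).mpr hs
  have := hsucc.div (hs.mul (tendsto_natCast_div_add_atTop (1 : ℝ))) (by simpa using hc)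
  rw [mul_one, div_self hc] at this
  refine this.congr' ?_
  filter_upwards [eventually_ne_atTop 0] with k hk
  simp only [Pi.div_apply]
  field_simp

end RealSequence

section NormedSpace

variable {E : Type*} [NormedAddCommGroup E] [NormedSpace ℝ E] {P : Set E} {φ : E}

theorem norm_inv_smul_sub {c : ℝ} (hc : 0 < c) (x y : E) :
    ‖c⁻¹ • x - y‖ = ‖x - c • y‖ / c := by
  rw [eq_div_iff hc.ne']
  calc ‖c⁻¹ • x - y‖ * c = ‖c • (c⁻¹ • x - y)‖ := by
        rw [norm_smul, Real.norm_of_nonneg hc.le, mul_comm]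
    _ = ‖x - c • y‖ := by rw [smul_sub, smul_inv_smul₀ hc.ne']

theorem LogDenseAlong.exists_norm_sub_smul_lt (h : LogDenseAlong P φ) (hφ : ‖φ‖ = 1) :
    ∀ ε > (0 : ℝ), ∃ C₀ > (0 : ℝ), ∀ C ≥ C₀, ∃ p ∈ P, ‖p - C • φ‖ < C * ε := by
  intro ε hε
  obtain ⟨s, hsP, hs, hratio⟩ := h (ε / 2) (half_pos hε)
  obtain ⟨C₀, hC₀, hC⟩ := exists_le_and_lt_one_add_mul_of_tendsto_succ_div hs hratio (half_pos hε)
  refine ⟨C₀, hC₀, fun C hC₀C => ?_⟩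
  obtain ⟨k, hpos, hle, hlt⟩ := hC C hC₀C
  obtain ⟨p, hp, hdir, hps⟩ := hsP k
  rw [← hps] at hpos hle hlt
  refine ⟨p, hp, ?_⟩
  have hdir' : ‖p - ‖p‖ • φ‖ < ‖p‖ * (ε / 2) := by
    rwa [norm_inv_smul_sub hpos, div_lt_iff₀' hpos] at hdir
  calc ‖p - C • φ‖ = ‖(p - ‖p‖ • φ) + (‖p‖ - C) • φ‖ := by rw [sub_smul]; abel_nf
    _ ≤ ‖p - ‖p‖ • φ‖ + |‖p‖ - C| := by
        grw [norm_add_le, norm_smul, hφ, mul_one, Real.norm_eq_abs]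
    _ < ‖p‖ * (ε / 2) + ‖p‖ * (ε / 2) := by
        rw [abs_of_nonpos (sub_nonpos.mpr hle)]
        linarith
    _ ≤ C * ε := by nlinarith

theorem exists_seq_mem_tendsto_inv_smul
    (h : ∀ ε > (0 : ℝ), ∃ C₀ > (0 : ℝ), ∀ C ≥ C₀, ∃ p ∈ P, ‖p - C • φ‖ < C * ε) :
    ∃ p : ℕ → E, (∀ k, p k ∈ P) ∧ Tendsto (fun k : ℕ => (k : ℝ)⁻¹ • p k) atTop (𝓝 φ) := by
  have hne : P.Nonempty := by
    obtain ⟨C₀, -, hC⟩ := h 1 one_pos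
    obtain ⟨p, hp, -⟩ := hC C₀ le_rfl
    exact ⟨p, hp⟩
  have hnear (k : ℕ) : ∃ p ∈ P, dist ((k : ℝ) • φ) p < Metric.infDist ((k : ℝ) • φ) P + 1 :=
    (Metric.infDist_lt_iff hne).mp (lt_add_one _)
  choose p hpP hp using hnear
  refine ⟨p, hpP, Metric.tendsto_nhds.mpr fun ε hε => ?_⟩
  obtain ⟨C₀, -, hC⟩ := h (ε / 2) (half_pos hε)
  filter_upwards [tendsto_natCast_atTop_atTop.eventually_ge_atTop (max C₀ (2 / ε))] with k hk
  have hk2 : 2 / ε ≤ k := le_of_max_le_right hk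
  have hkpos : (0 : ℝ) < k := (div_pos two_pos hε).trans_le hk2
  obtain ⟨q, hq, hqk⟩ := hC k (le_of_max_le_left hk)
  have hinf : Metric.infDist ((k : ℝ) • φ) P < k * (ε / 2) :=
    (Metric.infDist_le_dist_of_mem hq).trans_lt (by rwa [dist_comm, dist_eq_norm])
  have hone : 1 ≤ k * (ε / 2) := by
    rw [div_le_iff₀ hε] at hk2
    linarith
  rw [dist_eq_norm, norm_inv_smul_sub hkpos, div_lt_iff₀ hkpos, ← dist_eq_norm, dist_comm]
  linarith [hp k]

theorem logDenseAlong_of_tendsto_inv_smul (hφ : ‖φ‖ = 1) {p : ℕ → E} (hpP : ∀ k, p k ∈ P)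
    (hp : Tendsto (fun k : ℕ => (k : ℝ)⁻¹ • p k) atTop (𝓝 φ)) : LogDenseAlong P φ := by
  have hnorm : Tendsto (fun k : ℕ => ‖p k‖ / k) atTop (𝓝 1) := by
    refine hφ ▸ hp.norm.congr fun k => ?_
    rw [norm_smul, norm_inv, RCLike.norm_natCast, inv_mul_eq_div]
  have hdir : Tendsto (fun k => ‖p k‖⁻¹ • p k) atTop (𝓝 φ) := by
    have := (hnorm.inv₀ one_ne_zero).smul hp
    rw [inv_one, one_smul] at this
    refine this.congr' ?_
    filter_upwards [eventually_ne_atTop 0] with k hk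
    rw [smul_smul, inv_div, div_mul_eq_mul_div, mul_inv_cancel₀ (Nat.cast_ne_zero.mpr hk), one_div]
  intro ε hε
  obtain ⟨K, hK⟩ := eventually_atTop.mp <| Metric.tendsto_nhds.mp hdir ε hε
  refine ⟨fun k => ‖p (k + K)‖, fun k => ⟨p (k + K), hpP _, ?_, rfl⟩, ?_, ?_⟩
  · rw [← dist_eq_norm]
    exact hK _ le_add_self
  · exact (tendsto_add_atTop_iff_nat K).mpr (hnorm.atTop_of_div_natCast one_pos)
  · simpa only [Nat.add_right_comm] using
      (tendsto_add_atTop_iff_nat K).mpr (hnorm.succ_div_of_div_natCast one_ne_zero)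

end NormedSpace

theorem stmt2 {m : ℕ} (P : Set (EuclideanSpace ℝ (Fin m)))
    (φ : EuclideanSpace ℝ (Fin m)) (hφ : ‖φ‖ = 1) :
    LogDenseAlong P φ ↔
      ∀ ε > (0 : ℝ), ∃ C₀ > (0 : ℝ), ∀ C ≥ C₀,
        ∃ p ∈ P, ‖p - C • φ‖ < C * ε := by
  refine ⟨fun h => h.exists_norm_sub_smul_lt hφ, fun h => ?_⟩
  obtain ⟨p, hpP, hp⟩ := exists_seq_mem_tendsto_inv_smul h
  exact logDenseAlong_of_tendsto_inv_smul hφ hpP hp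
end

section
/- Let F be an s-dimensional linear subspace of ℝ^n and H an l-dimensional linear subspace of ℝ^m. Then the set of m×n real matrices A such that dim(A·F + H) = min(s+l, m) is open and dense in the space M_{m,n} of m×n real matrices. -/
open Matrix Module

noncomputable section

namespace Stmt5Aux

lemma exists_dual {r m : ℕ} (y : Fin r → (Fin m → ℝ)) (hy : LinearIndependent ℝ y) :
    ∃ L : (Fin m → ℝ) →ₗ[ℝ] (Fin r → ℝ), ∀ i, L (y i) = Pi.single i 1 := by
  set M : Matrix (Fin m) (Fin r) ℝ := Matrix.of fun j i => y i j with hM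
  have hker : LinearMap.ker M.mulVecLin = ⊥ := by
    rw [LinearMap.ker_eq_bot']
    intro c hc
    have hsum : ∑ i, c i • y i = 0 := by
      ext j
      have := congrFun hc j
      simpa [M, Matrix.mulVecLin_apply, Matrix.mulVec, dotProduct, mul_comm,
        Finset.sum_apply] using this
    funext i
    exact Fintype.linearIndependent_iff.1 hy c hsum i
  obtain ⟨L, hL⟩ := M.mulVecLin.exists_leftInverse_of_injective hker
  refine ⟨L, fun i => ?_⟩
  have h1 : M.mulVecLin (Pi.single i 1) = y i := by
    funext j
    simp [M, Matrix.mulVecLin_apply]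
  calc L (y i) = (L.comp M.mulVecLin) (Pi.single i 1) := by rw [LinearMap.comp_apply, h1]
  _ = Pi.single i 1 := by rw [hL]; rfl

lemma det_single {r : ℕ} :
    (Matrix.of fun j i => (Pi.single i 1 : Fin r → ℝ) j).det ≠ 0 := by
  have h : (Matrix.of fun j i => (Pi.single i 1 : Fin r → ℝ) j) = 1 := by
    ext j i
    simp [Matrix.one_apply, Pi.single_apply]
  rw [h, Matrix.det_one]
  exact one_ne_zero

lemma rank_le {m n s l : ℕ} (F : Submodule ℝ (Fin n → ℝ)) (hF : Module.finrank ℝ F = s)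
    (H : Submodule ℝ (Fin m → ℝ)) (hH : Module.finrank ℝ H = l) (A : Matrix (Fin m) (Fin n) ℝ) :
    Module.finrank ℝ ↥(F.map A.mulVecLin ⊔ H) ≤ min (s + l) m := by
  have h1 : Module.finrank ℝ ↥(F.map A.mulVecLin ⊔ H) ≤ m := by
    have := Submodule.finrank_le (F.map A.mulVecLin ⊔ H)
    simpa [Module.finrank_pi] using this
  have h2 : Module.finrank ℝ ↥(F.map A.mulVecLin ⊔ H) ≤ s + l := by
    have hle := Submodule.finrank_sup_add_finrank_inf_eq (F.map A.mulVecLin) H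
    have hm : Module.finrank ℝ ↥(F.map A.mulVecLin) ≤ s := by
      have := Submodule.finrank_map_le A.mulVecLin F
      omega
    omega
  omega

lemma mem_iff {m n s l : ℕ} (F : Submodule ℝ (Fin n → ℝ)) (hF : Module.finrank ℝ F = s)
    (H : Submodule ℝ (Fin m → ℝ)) (hH : Module.finrank ℝ H = l) (A : Matrix (Fin m) (Fin n) ℝ) :
    Module.finrank ℝ ↥(F.map A.mulVecLin ⊔ H) = min (s + l) m ↔
    ∃ (v : Fin (min (s + l) m) → (Fin n → ℝ)) (w : Fin (min (s + l) m) → (Fin m → ℝ))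
      (L : (Fin m → ℝ) →ₗ[ℝ] (Fin (min (s + l) m) → ℝ)),
      (∀ i, v i ∈ F) ∧ (∀ i, w i ∈ H) ∧
      (Matrix.of fun j i => L (A.mulVec (v i) + w i) j).det ≠ 0 := by
  set P := F.map A.mulVecLin ⊔ H with hP
  constructor
  · intro heq
    have hle : min (s + l) m ≤ Module.finrank ℝ P := heq.ge
    let bP := Module.finBasis ℝ P
    set y : Fin (min (s + l) m) → (Fin m → ℝ) := fun i => (bP (Fin.castLE hle i) : Fin m → ℝ)
      with hy
    have hyind : LinearIndependent ℝ y :=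
      (bP.linearIndependent.map' P.subtype P.ker_subtype).comp _ (Fin.castLE_injective hle)
    have hmem : ∀ i, ∃ vi ∈ F, ∃ wi ∈ H, A.mulVec vi + wi = y i := by
      intro i
      have : y i ∈ P := (bP (Fin.castLE hle i)).2
      rw [hP, Submodule.mem_sup] at this
      obtain ⟨a, ha, b, hb, hab⟩ := this
      obtain ⟨vi, hvi, rfl⟩ := Submodule.mem_map.1 ha
      exact ⟨vi, hvi, b, hb, hab⟩
    choose v hv w hw hvw using hmem
    obtain ⟨L, hL⟩ := exists_dual y hyind
    refine ⟨v, w, L, hv, hw, ?_⟩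
    have h : (Matrix.of fun j i => L (A.mulVec (v i) + w i) j)
        = Matrix.of fun j i => (Pi.single i 1 : Fin (min (s + l) m) → ℝ) j := by
      ext j i
      simp only [Matrix.of_apply]
      rw [hvw, hL]
    rw [h]
    exact det_single
  · rintro ⟨v, w, L, hv, hw, hdet⟩
    refine le_antisymm (rank_le F hF H hH A) ?_
    set u : Fin (min (s + l) m) → (Fin m → ℝ) := fun i => A.mulVec (v i) + w i with hu
    have huP : ∀ i, u i ∈ P := by
      intro i
      refine Submodule.add_mem _ (Submodule.mem_sup_left ?_) (Submodule.mem_sup_right (hw i))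
      exact Submodule.mem_map_of_mem (hv i)
    have hGunit : IsUnit (Matrix.of fun j i => L (u i) j) := by
      rw [Matrix.isUnit_iff_isUnit_det, isUnit_iff_ne_zero]
      exact hdet
    have hinj := Matrix.mulVec_injective_iff_isUnit.2 hGunit
    have hLu : LinearIndependent ℝ fun i => L (u i) := by
      rw [Fintype.linearIndependent_iff]
      intro g hg
      have h0 : (Matrix.of fun j i => L (u i) j).mulVec g = 0 := by
        funext j
        have := congrFun hg j
        simpa [Matrix.mulVec, dotProduct, Finset.sum_apply, mul_comm] using this
      have := hinj (a₁ := g) (a₂ := 0) (by rw [h0, Matrix.mulVec_zero])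
      intro i; exact congrFun this i
    have huind : LinearIndependent ℝ u := hLu.of_comp L
    set u' : Fin (min (s + l) m) → P := fun i => ⟨u i, huP i⟩ with hu'
    have hu'ind : LinearIndependent ℝ u' := by
      apply LinearIndependent.of_comp P.subtype
      exact huind
    simpa using hu'ind.fintype_card_le_finrank

lemma exists_witness {m n s l : ℕ} (F : Submodule ℝ (Fin n → ℝ)) (hF : Module.finrank ℝ F = s)
    (H : Submodule ℝ (Fin m → ℝ)) (hH : Module.finrank ℝ H = l) :
    ∃ (B : Matrix (Fin m) (Fin n) ℝ) (v : Fin (min (s + l) m) → (Fin n → ℝ))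
      (w : Fin (min (s + l) m) → (Fin m → ℝ))
      (L : (Fin m → ℝ) →ₗ[ℝ] (Fin (min (s + l) m) → ℝ)),
      (∀ i, v i ∈ F) ∧ (∀ i, w i ∈ H) ∧
      (Matrix.of fun j i => L (B.mulVec (v i) + w i) j).det ≠ 0 := by
  have hlm : l ≤ m := by
    have := Submodule.finrank_le H
    simpa [hH, Module.finrank_pi] using this
  set s' := min s (m - l) with hs'
  have hr : s' + l = min (s + l) m := by omega
  obtain ⟨K, hK⟩ := Submodule.exists_isCompl H
  have hKrank : Module.finrank ℝ K = m - l := by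
    have := Submodule.finrank_add_eq_of_isCompl hK
    rw [hH] at this
    simp only [Module.finrank_pi, Fintype.card_fin] at this
    omega
  let bF : Basis (Fin s) ℝ F := (Module.finBasis ℝ F).reindex (finCongr hF)
  let bH : Basis (Fin l) ℝ H := (Module.finBasis ℝ H).reindex (finCongr hH)
  let bK : Basis (Fin (m - l)) ℝ K := (Module.finBasis ℝ K).reindex (finCongr hKrank)
  have hs'1 : s' ≤ s := min_le_left _ _
  have hs'2 : s' ≤ m - l := min_le_right _ _
  let u : Fin s → (Fin m → ℝ) := fun j =>
    if h : (j : ℕ) < m - l then (bK ⟨j, h⟩ : Fin m → ℝ) else 0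
  obtain ⟨F', hF'⟩ := Submodule.exists_isCompl F
  let φ : (Fin n → ℝ) →ₗ[ℝ] (Fin m → ℝ) :=
    ((Basis.constr bF ℝ u).comp (F.linearProjOfIsCompl F' hF'))
  let B := LinearMap.toMatrix' φ
  have hBv : ∀ x, B.mulVec x = φ x := by
    intro x
    have : B.mulVec x = Matrix.toLin' B x := rfl
    rw [this, Matrix.toLin'_toMatrix']
  let e : Fin s' ⊕ Fin l ≃ Fin (min (s + l) m) := finSumFinEquiv.trans (finCongr hr)
  let g1 : Fin s' → (Fin m → ℝ) := fun j => (bK (Fin.castLE hs'2 j) : Fin m → ℝ)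
  let g2 : Fin l → (Fin m → ℝ) := fun j => (bH j : Fin m → ℝ)
  have hz : LinearIndependent ℝ (Sum.elim g1 g2) := by
    apply LinearIndependent.sum_type
    · exact (bK.linearIndependent.map' K.subtype K.ker_subtype).comp _ (Fin.castLE_injective hs'2)
    · exact bH.linearIndependent.map' H.subtype H.ker_subtype
    · apply Disjoint.mono _ _ hK.disjoint.symm
      · rw [Submodule.span_le]
        rintro x ⟨j, rfl⟩
        exact (bK (Fin.castLE hs'2 j)).2
      · rw [Submodule.span_le]
        rintro x ⟨j, rfl⟩
        exact (bH j).2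
  set y : Fin (min (s + l) m) → (Fin m → ℝ) := (Sum.elim g1 g2) ∘ e.symm with hy
  have hyind : LinearIndependent ℝ y := hz.comp e.symm e.symm.injective
  obtain ⟨L, hL⟩ := exists_dual y hyind
  set v : Fin (min (s + l) m) → (Fin n → ℝ) :=
    (Sum.elim (fun j => ((bF (Fin.castLE hs'1 j) : F) : Fin n → ℝ)) (fun _ => 0)) ∘ e.symm with hv
  set w : Fin (min (s + l) m) → (Fin m → ℝ) := (Sum.elim (fun _ => 0) g2) ∘ e.symm with hw
  have key : ∀ i, B.mulVec (v i) + w i = y i := by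
    intro i
    rw [hv, hw, hy]
    simp only [Function.comp_apply]
    cases hk : e.symm i with
    | inl j =>
      simp only [Sum.elim_inl, add_zero]
      rw [hBv]
      show ((Basis.constr bF ℝ u).comp (F.projectionOnto F' hF'))
          ((bF (Fin.castLE hs'1 j) : F) : Fin n → ℝ) = g1 j
      rw [LinearMap.comp_apply, Submodule.projectionOnto_apply_left, Module.Basis.constr_basis]
      have hjlt : ((Fin.castLE hs'1 j : Fin s) : ℕ) < m - l := lt_of_lt_of_le j.2 hs'2
      show u (Fin.castLE hs'1 j) = g1 j
      rw [show u (Fin.castLE hs'1 j) = (bK ⟨(Fin.castLE hs'1 j : Fin s), hjlt⟩ : Fin m → ℝ)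
        from dif_pos hjlt]
      congr 1
    | inr j =>
      simp only [Sum.elim_inr]
      rw [hBv, map_zero, zero_add]
  refine ⟨B, v, w, L, ?_, ?_, ?_⟩
  · intro i
    rw [hv]
    simp only [Function.comp_apply]
    cases e.symm i with
    | inl j => exact (bF (Fin.castLE hs'1 j)).2
    | inr j => exact F.zero_mem
  · intro i
    rw [hw]
    simp only [Function.comp_apply]
    cases e.symm i with
    | inl j => exact H.zero_mem
    | inr j => exact (bH j).2
  · have h : (Matrix.of fun j i => L (B.mulVec (v i) + w i) j)
        = Matrix.of fun j i => (Pi.single i 1 : Fin (min (s + l) m) → ℝ) j := by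
      ext j i
      simp only [Matrix.of_apply]
      rw [key, hL]
    rw [h]
    exact det_single

end Stmt5Aux

open Stmt5Aux in
theorem stmt5 {m n s l : ℕ}
    (F : Submodule ℝ (Fin n → ℝ)) (hF : Module.finrank ℝ F = s)
    (H : Submodule ℝ (Fin m → ℝ)) (hH : Module.finrank ℝ H = l) :
    IsOpen {A : Matrix (Fin m) (Fin n) ℝ |
        Module.finrank ℝ ↥(F.map A.mulVecLin ⊔ H) = min (s + l) m} ∧
    Dense {A : Matrix (Fin m) (Fin n) ℝ |
        Module.finrank ℝ ↥(F.map A.mulVecLin ⊔ H) = min (s + l) m} := by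
  constructor
  · have hset : {A : Matrix (Fin m) (Fin n) ℝ |
        Module.finrank ℝ ↥(F.map A.mulVecLin ⊔ H) = min (s + l) m} =
        ⋃ (v : Fin (min (s + l) m) → (Fin n → ℝ)) (w : Fin (min (s + l) m) → (Fin m → ℝ))
          (L : (Fin m → ℝ) →ₗ[ℝ] (Fin (min (s + l) m) → ℝ)) (_ : ∀ i, v i ∈ F)
          (_ : ∀ i, w i ∈ H),
          {A : Matrix (Fin m) (Fin n) ℝ |
            (Matrix.of fun j i => L (A.mulVec (v i) + w i) j).det ≠ 0} := by
      ext A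
      simp only [Set.mem_iUnion, Set.mem_setOf_eq, mem_iff F hF H hH A]
      tauto
    rw [hset]
    refine isOpen_iUnion fun v => isOpen_iUnion fun w => isOpen_iUnion fun L =>
      isOpen_iUnion fun _ => isOpen_iUnion fun _ => ?_
    have hcont : Continuous fun A : Matrix (Fin m) (Fin n) ℝ =>
        (Matrix.of fun j i => L (A.mulVec (v i) + w i) j).det := by
      apply Continuous.matrix_det
      apply continuous_matrix
      intro j i
      have h1 : Continuous fun A : Matrix (Fin m) (Fin n) ℝ => A.mulVec (v i) + w i :=
        (continuous_id.matrix_mulVec continuous_const).add continuous_const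
      exact (continuous_apply j).comp (L.continuous_of_finiteDimensional.comp h1)
    exact isOpen_ne.preimage hcont
  · intro A
    obtain ⟨B, v, w, L, hv, hw, hdet⟩ := exists_witness F hF H hH
    rw [mem_closure_iff_nhds]
    intro U hU
    set P : Matrix (Fin (min (s + l) m)) (Fin (min (s + l) m)) (Polynomial ℝ) :=
      Matrix.of fun j i =>
        Polynomial.C (L (A.mulVec (v i) + w i) j) +
          Polynomial.C (L ((B - A).mulVec (v i)) j) * Polynomial.X with hPdef
    have hPeval : ∀ t : ℝ, Polynomial.eval t P.det =
        (Matrix.of fun j i => L ((A + t • (B - A)).mulVec (v i) + w i) j).det := by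
      intro t
      rw [← Polynomial.coe_evalRingHom, RingHom.map_det]
      congr 1
      ext j i
      simp only [hPdef, Matrix.map_apply, Matrix.of_apply, Polynomial.coe_evalRingHom,
        Polynomial.eval_add, Polynomial.eval_mul, Polynomial.eval_C, Polynomial.eval_X,
        RingHom.mapMatrix_apply, Matrix.add_mulVec, Matrix.smul_mulVec, map_add,
        _root_.map_smul, Pi.add_apply, Pi.smul_apply, smul_eq_mul]
      ring
    have hB1 : A + (1 : ℝ) • (B - A) = B := by
      rw [one_smul]
      abel
    have hP0 : P.det ≠ 0 := by
      intro h0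
      apply hdet
      have h1 := hPeval 1
      rw [h0, Polynomial.eval_zero, hB1] at h1
      exact h1.symm
    have hfin : {t : ℝ | P.det.IsRoot t}.Finite := Polynomial.finite_setOf_isRoot hP0
    have hc : Continuous fun t : ℝ => A + t • (B - A) :=
      continuous_const.add (continuous_id.smul continuous_const)
    have hc0 : (fun t : ℝ => A + t • (B - A)) 0 = A := by simp
    have hpre : (fun t : ℝ => A + t • (B - A)) ⁻¹' U ∈ nhds (0 : ℝ) :=
      hc.continuousAt.preimage_mem_nhds (by simpa using hU)
    have hinf : ((fun t : ℝ => A + t • (B - A)) ⁻¹' U).Infinite :=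
      infinite_of_mem_nhds (0 : ℝ) hpre
    obtain ⟨t, htU, htroot⟩ := (hinf.diff hfin).nonempty
    refine ⟨A + t • (B - A), htU, ?_⟩
    rw [Set.mem_setOf_eq, mem_iff F hF H hH]
    refine ⟨v, w, L, hv, hw, ?_⟩
    rw [← hPeval t]
    intro h
    exact htroot (by simpa [Polynomial.IsRoot] using h)
end
end

section
/- The set of m×n real matrices A such that dim(A·F + H) ≠ min(s+l, m) is contained in the zero set of a nonzero polynomial in the entries of A, for any s-dimensional subspace F ⊆ ℝ^n and l-dimensional subspace H ⊆ ℝ^m. In particular it is a proper algebraic subset of M_{m,n}. -/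
open Matrix Module Submodule LinearMap Set

/-- span of the coercions of a basis of a submodule is the submodule -/
lemma span_range_coe_basis {V : Type*} [AddCommGroup V] [Module ℝ V]
    (p : Submodule ℝ V) {ι : Type*} (b : Basis ι ℝ p) :
    span ℝ (Set.range fun i => (b i : V)) = p := by
  have h := congrArg (Submodule.map p.subtype) b.span_eq
  rwa [Submodule.map_span, Submodule.map_top, Submodule.range_subtype,
    ← Set.range_comp] at h

/-- a submodule of any dimension up to the total dimension exists -/
lemma exists_submodule_finrank_eq {V : Type*} [AddCommGroup V] [Module ℝ V]
    [FiniteDimensional ℝ V] {k : ℕ} (hk : k ≤ finrank ℝ V) :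
    ∃ S : Submodule ℝ V, finrank ℝ S = k := by
  classical
  let b := Module.finBasis ℝ V
  refine ⟨span ℝ (Set.range fun i : Fin k => b (Fin.castLE hk i)), ?_⟩
  have li : LinearIndependent ℝ (fun i : Fin k => b (Fin.castLE hk i)) :=
    b.linearIndependent.comp _ (Fin.castLE_injective hk)
  rw [finrank_span_eq_card li, Fintype.card_fin]

/-- a rank-`r` map between function spaces has a two-sided "section" pair. -/
lemma exists_pq {α β : Type*} [Fintype α] [Fintype β] {r : ℕ}
    (L : (α → ℝ) →ₗ[ℝ] (β → ℝ)) (hr : finrank ℝ (LinearMap.range L) = r) :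
    ∃ (p : (β → ℝ) →ₗ[ℝ] (Fin r → ℝ)) (q : (Fin r → ℝ) →ₗ[ℝ] (α → ℝ)),
      p ∘ₗ L ∘ₗ q = LinearMap.id := by
  classical
  obtain ⟨C, hC⟩ := Submodule.exists_isCompl (LinearMap.range L)
  have e : (Fin r → ℝ) ≃ₗ[ℝ] LinearMap.range L :=
    LinearEquiv.ofFinrankEq _ _ (by rw [hr, Module.finrank_fin_fun])
  obtain ⟨g, hg⟩ := L.rangeRestrict.exists_rightInverse_of_surjective
    (LinearMap.range_eq_top.mpr L.surjective_rangeRestrict)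
  refine ⟨e.symm.toLinearMap ∘ₗ (LinearMap.range L).projectionOnto C hC,
    g ∘ₗ e.toLinearMap, ?_⟩
  refine LinearMap.ext fun x => ?_
  have h1 : L (g (e x)) = ((e x : ↥(LinearMap.range L)) : β → ℝ) := by
    have h2 : L.rangeRestrict (g (e x)) = e x := by
      have := congrArg (fun (f : _ →ₗ[ℝ] ↥(LinearMap.range L)) => f (e x)) hg
      simpa only [LinearMap.comp_apply, LinearMap.id_apply] using this
    exact congrArg Subtype.val h2
  simp only [LinearMap.comp_apply, LinearEquiv.coe_coe, LinearMap.id_apply, h1,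
    Submodule.projectionOnto_apply_left hC, LinearEquiv.symm_apply_apply]

/-- existence of a matrix achieving the generic dimension -/
lemma exists_generic {m n s l : ℕ}
    (F : Submodule ℝ (Fin n → ℝ)) (hF : Module.finrank ℝ F = s)
    (H : Submodule ℝ (Fin m → ℝ)) (hH : Module.finrank ℝ H = l) :
    ∃ A₀ : Matrix (Fin m) (Fin n) ℝ,
      Module.finrank ℝ ↥(F.map A₀.mulVecLin ⊔ H) = min (s + l) m := by
  classical
  set r := min (s + l) m with hrdef
  have hlm : l ≤ m := by
    have := H.finrank_le
    rwa [hH, Module.finrank_fin_fun] at this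
  have hlr : l ≤ r := le_min (Nat.le_add_left l s) hlm
  have hrm : r ≤ m := min_le_right _ _
  have hrs : r - l ≤ s := by omega
  -- complement of H
  obtain ⟨C, hC⟩ := Submodule.exists_isCompl H
  have hCm : finrank ℝ H + finrank ℝ C = m := by
    have := Submodule.finrank_add_eq_of_isCompl hC
    rwa [Module.finrank_fin_fun] at this
  have hk : r - l ≤ finrank ℝ C := by omega
  obtain ⟨S0, hS0⟩ := exists_submodule_finrank_eq hk
  set S' : Submodule ℝ (Fin m → ℝ) := S0.map C.subtype with hS'def
  have hS'rank : finrank ℝ S' = r - l := by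
    rw [hS'def, Submodule.finrank_map_subtype_eq, hS0]
  have hS'C : S' ≤ C := by
    rw [hS'def]; exact Submodule.map_subtype_le C S0
  have hdisj : Disjoint S' H := (hC.disjoint.symm.mono_left hS'C)
  have hsup : finrank ℝ ↥(S' ⊔ H) = r := by
    have h2 := Submodule.finrank_sup_add_finrank_inf_eq S' H
    rw [disjoint_iff.mp hdisj, finrank_bot, hS'rank, hH] at h2
    omega
  -- build the map
  obtain ⟨Cn, hCn⟩ := Submodule.exists_isCompl F
  set π : (Fin n → ℝ) →ₗ[ℝ] F := F.projectionOnto Cn hCn with hπdef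
  let bF : Basis (Fin s) ℝ F := Module.finBasisOfFinrankEq ℝ F hF
  let bS : Basis (Fin (finrank ℝ S')) ℝ S' := Module.finBasis ℝ S'
  set v : Fin s → (Fin m → ℝ) :=
    fun i => if h : (i : ℕ) < finrank ℝ S' then (bS ⟨i, h⟩ : Fin m → ℝ) else 0 with hvdef
  have hv : span ℝ (Set.range v) = S' := by
    apply le_antisymm
    · rw [Submodule.span_le]
      rintro x ⟨i, rfl⟩
      rw [hvdef]
      by_cases h : (i : ℕ) < finrank ℝ S'
      · simp only [dif_pos h]; exact (bS ⟨i, h⟩).2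
      · simp only [dif_neg h]; exact S'.zero_mem
    · rw [← span_range_coe_basis S' bS, Submodule.span_le]
      rintro x ⟨j, rfl⟩
      apply Submodule.subset_span
      have hjr : (j : ℕ) < r - l := by rw [← hS'rank]; exact j.2
      have hj : (j : ℕ) < s := lt_of_lt_of_le hjr (by omega)
      refine ⟨⟨(j : ℕ), hj⟩, ?_⟩
      rw [hvdef]
      have hj2 : (((⟨(j : ℕ), hj⟩ : Fin s) : ℕ)) < finrank ℝ S' := j.2
      simp only [dif_pos hj2]
  set u : F →ₗ[ℝ] (Fin m → ℝ) := bF.constr ℝ v with hudef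
  have hu : LinearMap.range u = S' := by rw [hudef, Basis.constr_range, hv]
  set T : (Fin n → ℝ) →ₗ[ℝ] (Fin m → ℝ) := u ∘ₗ π with hTdef
  refine ⟨LinearMap.toMatrix' T, ?_⟩
  rw [← Matrix.toLin'_apply', Matrix.toLin'_toMatrix']
  have hmap : F.map T = S' := by
    have h1 : F.map π = ⊤ := by
      rw [eq_top_iff]
      rintro y -
      exact ⟨(y : Fin n → ℝ), y.2,
        by simpa [hπdef] using Submodule.projectionOnto_apply_left hCn y⟩
    rw [hTdef, Submodule.map_comp, h1, Submodule.map_top, hu]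
  rw [hmap, hsup]

theorem stmt6 {m n s l : ℕ}
    (F : Submodule ℝ (Fin n → ℝ)) (hF : Module.finrank ℝ F = s)
    (H : Submodule ℝ (Fin m → ℝ)) (hH : Module.finrank ℝ H = l) :
    ∃ f : MvPolynomial (Fin m × Fin n) ℝ, f ≠ 0 ∧
      ∀ A : Matrix (Fin m) (Fin n) ℝ,
        Module.finrank ℝ ↥(F.map A.mulVecLin ⊔ H) ≠ min (s + l) m →
          MvPolynomial.eval (fun ij => A ij.1 ij.2) f = 0 := by
  classical
  set r := min (s + l) m with hrdef
  let bF : Basis (Fin s) ℝ F := Module.finBasisOfFinrankEq ℝ F hF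
  let bH : Basis (Fin l) ℝ H := Module.finBasisOfFinrankEq ℝ H hH
  set Fmat : Matrix (Fin n) (Fin s) ℝ := Matrix.of fun i j => (bF j : Fin n → ℝ) i with hFm
  set Hmat : Matrix (Fin m) (Fin l) ℝ := Matrix.of fun i j => (bH j : Fin m → ℝ) i with hHm
  have hrangeF : LinearMap.range Fmat.mulVecLin = F := by
    rw [Matrix.range_mulVecLin]
    have : Set.range Fmat.col = Set.range fun j => (bF j : Fin n → ℝ) := rfl
    rw [this, span_range_coe_basis]
  have hrangeH : LinearMap.range Hmat.mulVecLin = H := by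
    rw [Matrix.range_mulVecLin]
    have : Set.range Hmat.col = Set.range fun j => (bH j : Fin m → ℝ) := rfl
    rw [this, span_range_coe_basis]
  -- the combined matrix
  set N : Matrix (Fin m) (Fin n) ℝ → Matrix (Fin m) (Fin s ⊕ Fin l) ℝ :=
    fun A => Matrix.fromCols (A * Fmat) Hmat with hNdef
  have hrangeN : ∀ A : Matrix (Fin m) (Fin n) ℝ,
      LinearMap.range (N A).mulVecLin = F.map A.mulVecLin ⊔ H := by
    intro A
    have h1 : F.map A.mulVecLin = LinearMap.range (A * Fmat).mulVecLin := by
      rw [Matrix.mulVecLin_mul, LinearMap.range_comp, hrangeF]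
    rw [h1, ← hrangeH]
    apply le_antisymm
    · rintro x ⟨v, rfl⟩
      have : (N A).mulVecLin v = (A * Fmat) *ᵥ (v ∘ Sum.inl) + Hmat *ᵥ (v ∘ Sum.inr) := by
        rw [hNdef]
        have hv : v = Sum.elim (v ∘ Sum.inl) (v ∘ Sum.inr) := (Sum.elim_comp_inl_inr v).symm
        simp only [Matrix.mulVecLin_apply]
        rw [hv]
        exact Matrix.fromCols_mulVec_sumElim _ _ _ _
      rw [this]
      exact Submodule.add_mem_sup ⟨v ∘ Sum.inl, rfl⟩ ⟨v ∘ Sum.inr, rfl⟩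
    · apply sup_le
      · rintro x ⟨v, rfl⟩
        refine ⟨Sum.elim v 0, ?_⟩
        simp only [Matrix.mulVecLin_apply, hNdef]
        rw [Matrix.fromCols_mulVec_sumElim]
        simp
      · rintro x ⟨v, rfl⟩
        refine ⟨Sum.elim 0 v, ?_⟩
        simp only [Matrix.mulVecLin_apply, hNdef]
        rw [Matrix.fromCols_mulVec_sumElim]
        simp
  have hrank : ∀ A : Matrix (Fin m) (Fin n) ℝ,
      (N A).rank = finrank ℝ ↥(F.map A.mulVecLin ⊔ H) := by
    intro A; rw [Matrix.rank, hrangeN]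
  have hrankle : ∀ A : Matrix (Fin m) (Fin n) ℝ, (N A).rank ≤ r := by
    intro A
    refine le_min ?_ ?_
    · have := (N A).rank_le_card_width
      simpa using this
    · have := (N A).rank_le_card_height
      simpa using this
  -- generic matrix
  obtain ⟨A₀, hA₀⟩ := exists_generic F hF H hH
  have hrA₀ : finrank ℝ (LinearMap.range (N A₀).mulVecLin) = r := by
    rw [hrangeN]; exact hA₀
  obtain ⟨p, q, hpq⟩ := exists_pq (N A₀).mulVecLin hrA₀
  set P : Matrix (Fin r) (Fin m) ℝ := LinearMap.toMatrix' p with hP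
  set Q : Matrix (Fin s ⊕ Fin l) (Fin r) ℝ := LinearMap.toMatrix' q with hQ
  -- key matrix identity at A₀
  have hPNQ : P * N A₀ * Q = 1 := by
    have h1 : LinearMap.toMatrix' ((N A₀).mulVecLin) = N A₀ := by
      rw [← Matrix.toLin'_apply', LinearMap.toMatrix'_toLin']
    calc P * N A₀ * Q
        = LinearMap.toMatrix' p * LinearMap.toMatrix' ((N A₀).mulVecLin)
            * LinearMap.toMatrix' q := by rw [hP, hQ, h1]
      _ = LinearMap.toMatrix' (p ∘ₗ (N A₀).mulVecLin ∘ₗ q) := by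
          rw [LinearMap.toMatrix'_comp, LinearMap.toMatrix'_comp, Matrix.mul_assoc]
      _ = 1 := by rw [hpq, LinearMap.toMatrix'_id]
  -- the polynomial
  set Xp : Matrix (Fin m) (Fin n) (MvPolynomial (Fin m × Fin n) ℝ) :=
    Matrix.of fun i j => MvPolynomial.X (i, j) with hXp
  set f : MvPolynomial (Fin m × Fin n) ℝ :=
    (P.map (MvPolynomial.C (σ := Fin m × Fin n)) * Matrix.fromCols (Xp * Fmat.map (MvPolynomial.C (σ := Fin m × Fin n)))
      (Hmat.map (MvPolynomial.C (σ := Fin m × Fin n))) * Q.map (MvPolynomial.C (σ := Fin m × Fin n))).det with hfdef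
  have heval : ∀ A : Matrix (Fin m) (Fin n) ℝ,
      MvPolynomial.eval (fun ij : Fin m × Fin n => A ij.1 ij.2) f
        = (P * N A * Q).det := by
    intro A
    set φ : MvPolynomial (Fin m × Fin n) ℝ →+* ℝ :=
      MvPolynomial.eval (fun ij : Fin m × Fin n => A ij.1 ij.2) with hφ
    have hmapC : ∀ {a b : Type} [Fintype a] [Fintype b] (M : Matrix a b ℝ),
        (M.map (MvPolynomial.C (σ := Fin m × Fin n))).map φ = M := by
      intro a b _ _ M
      ext i j
      simp [hφ, Matrix.map_apply]
    have hmapX : Xp.map φ = A := by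
      ext i j
      simp [hφ, hXp, Matrix.map_apply]
    have hfc : (Matrix.fromCols (Xp * Fmat.map (MvPolynomial.C (σ := Fin m × Fin n)))
        (Hmat.map (MvPolynomial.C (σ := Fin m × Fin n)))).map ⇑φ = N A := by
      simp only [hNdef]
      ext i (j | j)
      · simp [Matrix.map_apply, Matrix.mul_apply, hXp, hφ, map_sum]
      · simp [Matrix.map_apply, hφ]
    calc φ f = ((P.map (MvPolynomial.C (σ := Fin m × Fin n)) * Matrix.fromCols (Xp * Fmat.map (MvPolynomial.C (σ := Fin m × Fin n)))
          (Hmat.map (MvPolynomial.C (σ := Fin m × Fin n))) * Q.map (MvPolynomial.C (σ := Fin m × Fin n))).map φ).det := by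
          rw [hfdef, RingHom.map_det, RingHom.mapMatrix_apply]
      _ = (P * N A * Q).det := by
          rw [Matrix.map_mul, Matrix.map_mul, hmapC, hmapC, hfc]
  refine ⟨f, ?_, ?_⟩
  · intro h0
    have := heval A₀
    rw [h0, hPNQ] at this
    simp at this
  · intro A hA
    rw [heval A]
    by_contra hdet
    have hunit : IsUnit (P * N A * Q) :=
      (Matrix.isUnit_iff_isUnit_det _).mpr (Ne.isUnit hdet)
    have h1 : (P * N A * Q).rank = r := by
      rw [Matrix.rank_of_isUnit _ hunit, Fintype.card_fin]
    have h2 : (P * N A * Q).rank ≤ (N A).rank :=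
      le_trans (Matrix.rank_mul_le_left _ _) (Matrix.rank_mul_le_right _ _)
    have h4 : (N A).rank = r := le_antisymm (hrankle A) (by omega)
    rw [hrank A] at h4
    exact hA (by rw [hrdef] at h4 ⊢; exact h4)
end

section
/- For every δ > 0 there exists a constant C(δ) > 0 with the following property: for all unit vectors θ_1, θ_2 ∈ S^{n−1} with dist(θ_1, θ_2) > δ and dist(θ_1, −θ_2) > δ, all p_1, p_2 ∈ ℝ^m, every ε > 0, and all matrices Y_1, Y_2 ∈ M_{m,n} with Y_1 θ_1 = p_1, Y_2 θ_2 = p_2, and ‖Y_1 − Y_2‖ < ε, there exists Y ∈ M_{m,n} with Y θ_1 = p_1, Y θ_2 = p_2, ‖Y − Y_1‖ < C(δ)ε and ‖Y − Y_2‖ < C(δ)ε. -/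
attribute [local instance] Matrix.normedAddCommGroup

open scoped RealInnerProductSpace

private lemma coord_le_norm {k : ℕ} (v : EuclideanSpace ℝ (Fin k)) (i : Fin k) :
    |v i| ≤ ‖v‖ := by
  rw [EuclideanSpace.norm_eq]
  have h1 : |v i| = Real.sqrt (‖v i‖ ^ 2) := by
    rw [Real.sqrt_sq_eq_abs, Real.norm_eq_abs, abs_abs]
  rw [h1]
  apply Real.sqrt_le_sqrt
  exact Finset.single_le_sum (f := fun j => ‖v j‖ ^ 2) (fun j _ => by positivity)
    (Finset.mem_univ i)

private lemma lin_bound {m n : ℕ} (A : Matrix (Fin m) (Fin n) ℝ)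
    (v : EuclideanSpace ℝ (Fin n)) :
    ‖Matrix.toEuclideanLin A v‖ ≤ (Real.sqrt m * n) * ‖A‖ * ‖v‖ := by
  have hentry : ∀ i, |(Matrix.toEuclideanLin A v) i| ≤ (n : ℝ) * ‖A‖ * ‖v‖ := by
    intro i
    have : (Matrix.toEuclideanLin A v) i = ∑ j, A i j * v j := by
      simp [Matrix.toEuclideanLin_apply, Matrix.mulVec, dotProduct]
    rw [this]
    calc |∑ j, A i j * v j| ≤ ∑ j, |A i j * v j| := Finset.abs_sum_le_sum_abs _ _
      _ ≤ ∑ _j : Fin n, ‖A‖ * ‖v‖ := by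
          apply Finset.sum_le_sum
          intro j _
          rw [abs_mul]
          exact mul_le_mul (A.norm_entry_le_entrywise_sup_norm) (coord_le_norm v j)
            (abs_nonneg _) (norm_nonneg _)
      _ = (n : ℝ) * ‖A‖ * ‖v‖ := by simp [Finset.sum_const, mul_assoc]
  rw [EuclideanSpace.norm_eq]
  have : ∑ i, ‖(Matrix.toEuclideanLin A v) i‖ ^ 2 ≤ (m : ℝ) * ((n : ℝ) * ‖A‖ * ‖v‖) ^ 2 := by
    calc ∑ i, ‖(Matrix.toEuclideanLin A v) i‖ ^ 2
        ≤ ∑ _i : Fin m, ((n : ℝ) * ‖A‖ * ‖v‖) ^ 2 := by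
          apply Finset.sum_le_sum
          intro i _
          rw [Real.norm_eq_abs]
          exact pow_le_pow_left₀ (abs_nonneg _) (hentry i) 2
      _ = (m : ℝ) * ((n : ℝ) * ‖A‖ * ‖v‖) ^ 2 := by simp
  calc Real.sqrt (∑ i, ‖(Matrix.toEuclideanLin A v) i‖ ^ 2)
      ≤ Real.sqrt ((m : ℝ) * ((n : ℝ) * ‖A‖ * ‖v‖) ^ 2) := Real.sqrt_le_sqrt this
    _ = Real.sqrt m * ((n : ℝ) * ‖A‖ * ‖v‖) := by
        rw [Real.sqrt_mul (by positivity), Real.sqrt_sq (by positivity)]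
    _ = (Real.sqrt m * n) * ‖A‖ * ‖v‖ := by ring

private lemma rankOne_apply {m n : ℕ} (q : EuclideanSpace ℝ (Fin m))
    (u θ : EuclideanSpace ℝ (Fin n)) :
    Matrix.toEuclideanLin (Matrix.of fun i j => q i * u j) θ = ⟪u, θ⟫ • q := by
  ext i
  have h1 : (Matrix.toEuclideanLin (Matrix.of fun i j => q i * u j) θ) i
      = ∑ j, q i * u j * θ j := by
    simp [Matrix.toEuclideanLin_apply, Matrix.mulVec, dotProduct]
  rw [h1, PiLp.smul_apply, smul_eq_mul, real_inner_comm, PiLp.inner_apply]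
  simp only [RCLike.inner_apply, conj_trivial]
  rw [Finset.sum_mul]
  exact Finset.sum_congr rfl fun j _ => by ring

set_option maxHeartbeats 1000000 in
theorem stmt7 {m n : ℕ} :
    ∀ δ > (0 : ℝ), ∃ C > (0 : ℝ),
      ∀ θ₁ θ₂ : EuclideanSpace ℝ (Fin n), ‖θ₁‖ = 1 → ‖θ₂‖ = 1 →
        δ < ‖θ₁ - θ₂‖ → δ < ‖θ₁ + θ₂‖ →
      ∀ p₁ p₂ : EuclideanSpace ℝ (Fin m), ∀ ε > (0 : ℝ),
      ∀ Y₁ Y₂ : Matrix (Fin m) (Fin n) ℝ,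
        Matrix.toEuclideanLin Y₁ θ₁ = p₁ → Matrix.toEuclideanLin Y₂ θ₂ = p₂ →
        ‖Y₁ - Y₂‖ < ε →
        ∃ Y : Matrix (Fin m) (Fin n) ℝ,
          Matrix.toEuclideanLin Y θ₁ = p₁ ∧ Matrix.toEuclideanLin Y θ₂ = p₂ ∧
          ‖Y - Y₁‖ < C * ε ∧ ‖Y - Y₂‖ < C * ε := by
  intro δ hδ
  set K : ℝ := Real.sqrt m * n + 1 with hKdef
  have hK : 0 < K := by positivity
  refine ⟨(2 / δ ^ 2) * K + 1, by positivity, ?_⟩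
  intro θ₁ θ₂ h1 h2 hd hsum p₁ p₂ ε hε Y₁ Y₂ hY1 hY2 hYd
  set t : ℝ := ⟪θ₁, θ₂⟫ with htdef
  have hns : ‖θ₁ - θ₂‖ ^ 2 = 2 - 2 * t := by
    rw [norm_sub_sq_real, h1, h2]; ring
  have hna : ‖θ₁ + θ₂‖ ^ 2 = 2 + 2 * t := by
    rw [norm_add_sq_real, h1, h2]; ring
  have h1t : δ ^ 2 < 2 - 2 * t := by nlinarith [norm_nonneg (θ₁ - θ₂)]
  have h2t : δ ^ 2 < 2 + 2 * t := by nlinarith [norm_nonneg (θ₁ + θ₂)]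
  set s : ℝ := 1 - t ^ 2 with hsdef
  have hs4 : δ ^ 4 / 4 < s := by nlinarith
  have hspos : 0 < s := by nlinarith
  set u : EuclideanSpace ℝ (Fin n) := θ₂ - t • θ₁ with hudef
  have e1 : ⟪θ₂, θ₁⟫ = t := by rw [htdef]; exact (real_inner_comm θ₂ θ₁).symm
  have e2 : ⟪θ₁, θ₁⟫ = 1 := by rw [real_inner_self_eq_norm_sq, h1]; norm_num
  have e3 : ⟪θ₂, θ₂⟫ = 1 := by rw [real_inner_self_eq_norm_sq, h2]; norm_num
  have hu1 : ⟪u, θ₁⟫ = 0 := by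
    simp only [hudef, inner_sub_left, inner_smul_left, conj_trivial]
    rw [e1, e2]; ring
  have hu2 : ⟪u, θ₂⟫ = s := by
    simp only [hudef, inner_sub_left, inner_smul_left, conj_trivial]
    rw [e3, ← htdef]; ring
  have hunorm2 : ‖u‖ ^ 2 = s := by
    rw [← real_inner_self_eq_norm_sq]
    have : ⟪u, u⟫ = ⟪u, θ₂⟫ - t * ⟪u, θ₁⟫ := by
      rw [hudef]; rw [inner_sub_right, real_inner_smul_right]
    rw [this, hu1, hu2]; ring
  have hunorm : ‖u‖ = Real.sqrt s := by
    rw [← hunorm2, Real.sqrt_sq (norm_nonneg u)]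
  set q : EuclideanSpace ℝ (Fin m) := p₂ - Matrix.toEuclideanLin Y₁ θ₂ with hqdef
  set M : Matrix (Fin m) (Fin n) ℝ := Matrix.of fun i j => (q i / s) * u j with hMdef
  have hMapp : ∀ θ : EuclideanSpace ℝ (Fin n),
      Matrix.toEuclideanLin M θ = ⟪u, θ⟫ • ((1 / s) • q) := by
    intro θ
    have : M = Matrix.of fun i j => ((1 / s) • q) i * u j := by
      ext i j
      simp only [hMdef, Matrix.of_apply, PiLp.smul_apply, smul_eq_mul]
      ring
    rw [this, rankOne_apply]
  have hq_eq : q = Matrix.toEuclideanLin (Y₂ - Y₁) θ₂ := by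
    rw [hqdef, ← hY2, map_sub, LinearMap.sub_apply]
  have hqnorm : ‖q‖ ≤ K * ‖Y₁ - Y₂‖ := by
    rw [hq_eq]
    calc ‖Matrix.toEuclideanLin (Y₂ - Y₁) θ₂‖
        ≤ (Real.sqrt m * n) * ‖Y₂ - Y₁‖ * ‖θ₂‖ := lin_bound _ _
      _ = (Real.sqrt m * n) * ‖Y₁ - Y₂‖ := by rw [h2, norm_sub_rev]; ring
      _ ≤ K * ‖Y₁ - Y₂‖ := by
          apply mul_le_mul_of_nonneg_right _ (norm_nonneg _)
          rw [hKdef]; linarith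
  have hsqrt : δ ^ 2 / 2 ≤ Real.sqrt s := by
    have h5 : δ ^ 2 / 2 = Real.sqrt (δ ^ 4 / 4) := by
      rw [show δ ^ 4 / 4 = (δ ^ 2 / 2) ^ 2 by ring, Real.sqrt_sq (by positivity)]
    rw [h5]
    exact Real.sqrt_le_sqrt hs4.le
  have hMnorm : ‖M‖ ≤ (2 / δ ^ 2) * ‖q‖ := by
    rw [Matrix.norm_le_iff (by positivity)]
    intro i j
    have h6 : ‖M i j‖ = |q i| * |u j| / s := by
      simp only [hMdef, Matrix.of_apply, Real.norm_eq_abs, abs_mul, abs_div,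
        abs_of_pos hspos]
      ring
    rw [h6]
    calc |q i| * |u j| / s ≤ ‖q‖ * ‖u‖ / s := by
          gcongr
          · exact coord_le_norm q i
          · exact coord_le_norm u j
      _ = ‖q‖ / Real.sqrt s := by
          rw [hunorm]
          field_simp
          rw [Real.sq_sqrt hspos.le]
      _ ≤ ‖q‖ / (δ ^ 2 / 2) := by gcongr
      _ = (2 / δ ^ 2) * ‖q‖ := by field_simp
  have hMbound : ‖M‖ ≤ (2 / δ ^ 2) * K * ‖Y₁ - Y₂‖ := by
    calc ‖M‖ ≤ (2 / δ ^ 2) * ‖q‖ := hMnorm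
      _ ≤ (2 / δ ^ 2) * (K * ‖Y₁ - Y₂‖) := by
          apply mul_le_mul_of_nonneg_left hqnorm (by positivity)
      _ = (2 / δ ^ 2) * K * ‖Y₁ - Y₂‖ := by ring
  refine ⟨Y₁ + M, ?_, ?_, ?_, ?_⟩
  · rw [map_add, LinearMap.add_apply, hY1, hMapp, hu1]
    simp
  · rw [map_add, LinearMap.add_apply, hMapp, hu2]
    have : (s : ℝ) • ((1 / s) • q) = q := by
      rw [smul_smul]
      rw [mul_one_div, div_self (ne_of_gt hspos), one_smul]
    rw [this, hqdef]
    abel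
  · -- ‖(Y₁+M) - Y₁‖ < C * ε
    have h0 : Y₁ + M - Y₁ = M := by abel
    rw [h0]
    calc ‖M‖ ≤ (2 / δ ^ 2) * K * ‖Y₁ - Y₂‖ := hMbound
      _ < (2 / δ ^ 2) * K * ε := by
          apply mul_lt_mul_of_pos_left hYd (by positivity)
      _ < ((2 / δ ^ 2) * K + 1) * ε := by nlinarith
  · -- ‖(Y₁+M) - Y₂‖ < C * ε
    have h3 : Y₁ + M - Y₂ = M + (Y₁ - Y₂) := by abel
    calc ‖Y₁ + M - Y₂‖ = ‖M + (Y₁ - Y₂)‖ := by rw [h3]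
      _ ≤ ‖M‖ + ‖Y₁ - Y₂‖ := norm_add_le _ _
      _ ≤ (2 / δ ^ 2) * K * ‖Y₁ - Y₂‖ + ‖Y₁ - Y₂‖ := by linarith [hMbound]
      _ < (2 / δ ^ 2) * K * ε + ε := by
          have h4 := mul_lt_mul_of_pos_left hYd (show (0:ℝ) < (2 / δ ^ 2) * K by positivity)
          linarith
      _ = ((2 / δ ^ 2) * K + 1) * ε := by ring
end

section
/- Let S ⊆ ℝ^d and let S_1 ⊆ S be such that for every s ∈ S_1 the origin lies in the convex hull of S \ {s}. Then there exists a subset S' ⊆ S of cardinality at most (d+1)(d+2) such that for every s ∈ S_1 the origin lies in the convex hull of S' \ {s}. -/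
open Classical in
lemma caratheodory_aux {d : ℕ} {A : Set (EuclideanSpace ℝ (Fin d))}
    (hA : (0 : EuclideanSpace ℝ (Fin d)) ∈ convexHull ℝ A) :
    ∃ t : Finset (EuclideanSpace ℝ (Fin d)), ↑t ⊆ A ∧ t.card ≤ d + 1 ∧
      (0 : EuclideanSpace ℝ (Fin d)) ∈ convexHull ℝ (t : Set (EuclideanSpace ℝ (Fin d))) := by
  rw [convexHull_eq_union] at hA
  simp only [Set.mem_iUnion] at hA
  obtain ⟨t, ht, hai, h0⟩ := hA
  refine ⟨t, ht, ?_, h0⟩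
  have := hai.card_le_finrank_succ
  rw [Fintype.card_coe] at this
  refine this.trans ?_
  have h2 : Module.finrank ℝ (vectorSpan ℝ (Set.range ((↑) : t → EuclideanSpace ℝ (Fin d))))
      ≤ Module.finrank ℝ (EuclideanSpace ℝ (Fin d)) := Submodule.finrank_le _
  simpa [finrank_euclideanSpace_fin] using Nat.add_le_add_right h2 1

theorem stmt9 {d : ℕ} (S S₁ : Set (EuclideanSpace ℝ (Fin d))) (hS₁ : S₁ ⊆ S)
    (h : ∀ s ∈ S₁, (0 : EuclideanSpace ℝ (Fin d)) ∈ convexHull ℝ (S \ {s})) :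
    ∃ S' ⊆ S, S'.Finite ∧ S'.ncard ≤ (d + 1) * (d + 2) ∧
      ∀ s ∈ S₁, (0 : EuclideanSpace ℝ (Fin d)) ∈ convexHull ℝ (S' \ {s}) := by
  classical
  rcases S₁.eq_empty_or_nonempty with rfl | ⟨s₀, hs₀⟩
  · exact ⟨∅, by simp, Set.finite_empty, by simp, by simp⟩
  -- choose for each s ∈ S₁ a witness finset
  have hg : ∀ s ∈ S₁, ∃ t : Finset (EuclideanSpace ℝ (Fin d)),
      ↑t ⊆ S \ {s} ∧ t.card ≤ d + 1 ∧
      (0 : EuclideanSpace ℝ (Fin d)) ∈ convexHull ℝ (t : Set (EuclideanSpace ℝ (Fin d))) :=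
    fun s hs => caratheodory_aux (h s hs)
  choose! g hg1 hg2 hg3 using hg
  set T₀ : Finset (EuclideanSpace ℝ (Fin d)) := g s₀ with hT₀
  set B : Finset (EuclideanSpace ℝ (Fin d)) :=
    (T₀.filter (· ∈ S₁)).biUnion g with hB
  refine ⟨↑(T₀ ∪ B), ?_, (T₀ ∪ B).finite_toSet, ?_, ?_⟩
  · intro x hx
    simp only [Finset.coe_union, Set.mem_union, Finset.mem_coe, Finset.mem_biUnion, hB] at hx
    rcases hx with hx | hx
    · exact ((hg1 s₀ hs₀) hx).1
    · obtain ⟨a, ha, hxa⟩ := hx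
      exact ((hg1 a (Finset.mem_filter.mp ha).2) hxa).1
  · rw [Set.ncard_coe_finset]
    calc (T₀ ∪ B).card ≤ T₀.card + B.card := Finset.card_union_le _ _
      _ ≤ (d + 1) + (d + 1) * (d + 1) := by
          refine Nat.add_le_add (hg2 s₀ hs₀) ?_
          calc B.card ≤ ∑ a ∈ T₀.filter (· ∈ S₁), (g a).card := Finset.card_biUnion_le
            _ ≤ ∑ _a ∈ T₀.filter (· ∈ S₁), (d + 1) := by
                refine Finset.sum_le_sum fun a ha => hg2 a (Finset.mem_filter.mp ha).2
            _ = (T₀.filter (· ∈ S₁)).card * (d + 1) := by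
                rw [Finset.sum_const, smul_eq_mul]
            _ ≤ (d + 1) * (d + 1) := by
                exact Nat.mul_le_mul_right _ ((Finset.card_filter_le _ _).trans (hg2 s₀ hs₀))
      _ = (d + 1) * (d + 2) := by ring
  · intro s hs
    by_cases hsT : s ∈ T₀
    · have hsB : (g s : Set _) ⊆ (↑(T₀ ∪ B) : Set _) \ {s} := by
        intro x hx
        refine ⟨?_, ?_⟩
        · simp only [Finset.coe_union, Set.mem_union, Finset.mem_coe, hB]
          exact Or.inr (Finset.mem_biUnion.mpr ⟨s, Finset.mem_filter.mpr ⟨hsT, hs⟩, hx⟩)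
        · intro hxs
          exact ((hg1 s hs) hx).2 hxs
      exact convexHull_mono hsB (hg3 s hs)
    · have hsB : (T₀ : Set _) ⊆ (↑(T₀ ∪ B) : Set _) \ {s} := by
        intro x hx
        refine ⟨by simp [Finset.mem_coe.mp hx], ?_⟩
        intro hxs
        simp only [Set.mem_singleton_iff] at hxs
        exact hsT (hxs ▸ hx)
      exact convexHull_mono hsB (hg3 s₀ hs₀)
end

section
/- Let H = { x ∈ ℝ^m : vᵀx ≥ 0 } be a closed linear half-space of ℝ^m (v a unit vector), and let Θ ⊆ S^{n−1}. If 0 lies in the convex hull of the closure of Θ, then for every matrix A ∈ M_{m,n} and every ε > 0 there exist θ in the closure of Θ and p ∈ H with ‖Aθ − p‖ < ε; in fact there exists θ in the closure of Θ with Aθ ∈ H. Conversely, if 0 does not lie in the convex hull of the closure of Θ, then there exists a nonempty open set W ⊆ M_{m,n} and for each A ∈ W a constant c(A) > 0 such that ‖Aθ − p‖ ≥ c(A) for all θ ∈ Θ and p ∈ H. -/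
open RealInnerProductSpace

private lemma isCompact_convexHull_of_isCompact {n : ℕ} {K : Set (EuclideanSpace ℝ (Fin n))}
    (hK : IsCompact K) : IsCompact (convexHull ℝ K) := by
  rcases K.eq_empty_or_nonempty with rfl | ⟨x₀, hx₀⟩
  · simp
  classical
  set φ : (Fin (n+1) → ℝ) × (Fin (n+1) → EuclideanSpace ℝ (Fin n)) → EuclideanSpace ℝ (Fin n) :=
    fun p => ∑ i, p.1 i • p.2 i with hφdef
  have hφ : Continuous φ := by
    apply continuous_finset_sum
    intro i _
    exact ((continuous_apply i).comp continuous_fst).smul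
      ((continuous_apply i).comp continuous_snd)
  set S : Set ((Fin (n+1) → ℝ) × (Fin (n+1) → EuclideanSpace ℝ (Fin n))) :=
    (stdSimplex ℝ (Fin (n+1))) ×ˢ (Set.univ.pi fun _ => K) with hSdef
  have hS : IsCompact S := (isCompact_stdSimplex _ _).prod (isCompact_univ_pi fun _ => hK)
  have himg : convexHull ℝ K = φ '' S := by
    apply Set.Subset.antisymm
    · intro x hx
      obtain ⟨ι, hfin, z, w, hrange, hindep, hpos, hsum, hx⟩ :=
        eq_pos_convex_span_of_mem_convexHull hx
      have hcard' : Fintype.card ι ≤ Fintype.card (Fin (n+1)) := by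
        have h1 := hindep.card_le_finrank_succ
        have h2 : Module.finrank ℝ (vectorSpan ℝ (Set.range z)) ≤ n := by
          have := Submodule.finrank_le (vectorSpan ℝ (Set.range z))
          rwa [finrank_euclideanSpace_fin] at this
        simp only [Fintype.card_fin]
        omega
      obtain ⟨e⟩ := Function.Embedding.nonempty_of_card_le hcard'
      set c : Fin (n+1) → ℝ := fun i => ∑ k : ι, if e k = i then w k else 0 with hc
      set z' : Fin (n+1) → EuclideanSpace ℝ (Fin n) :=
        fun i => if h : ∃ k, e k = i then z h.choose else x₀ with hz'
      have hz'e : ∀ k : ι, z' (e k) = z k := by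
        intro k
        have h : ∃ k', e k' = e k := ⟨k, rfl⟩
        rw [hz']
        simp only [dif_pos h]
        have hs := h.choose_spec
        have : h.choose = k := e.injective hs
        rw [this]
      have hcmem : c ∈ stdSimplex ℝ (Fin (n+1)) := by
        constructor
        · intro i
          exact Finset.sum_nonneg fun k _ => by split <;> [exact (hpos k).le; exact le_rfl]
        · rw [Finset.sum_comm]
          simpa using hsum
      have hzmem : z' ∈ Set.univ.pi fun _ : Fin (n+1) => K := by
        intro i _
        show (if h : ∃ k, e k = i then z h.choose else x₀) ∈ K
        split
        · exact hrange ⟨_, rfl⟩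
        · exact hx₀
      refine ⟨(c, z'), ⟨hcmem, hzmem⟩, ?_⟩
      simp only [hφdef]
      have hstep : ∀ i : Fin (n+1), c i • z' i = ∑ k : ι, (if e k = i then w k else 0) • z' i := by
        intro i
        show (∑ k : ι, if e k = i then w k else 0) • z' i = _
        rw [Finset.sum_smul]
      calc ∑ i, c i • z' i = ∑ i, ∑ k : ι, (if e k = i then w k else 0) • z' i :=
            Finset.sum_congr rfl fun i _ => hstep i
        _ = ∑ k : ι, ∑ i, (if e k = i then w k else 0) • z' i := Finset.sum_comm
        _ = ∑ k : ι, w k • z k := by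
            apply Finset.sum_congr rfl
            intro k _
            rw [Finset.sum_eq_single (e k)]
            · rw [if_pos rfl, hz'e]
            · intro b _ hb; rw [if_neg (Ne.symm hb), zero_smul]
            · intro h; exact absurd (Finset.mem_univ _) h
        _ = x := hx
    · rintro x ⟨⟨c, z⟩, ⟨⟨hc0, hc1⟩, hzK⟩, rfl⟩
      exact (convex_convexHull ℝ K).sum_mem (fun i _ => hc0 i) hc1
        (fun i _ => subset_convexHull ℝ K (hzK i (Set.mem_univ i)))
  rw [himg]
  exact hS.image hφ

private lemma coord_abs_le_norm {k : ℕ} (x : EuclideanSpace ℝ (Fin k)) (i : Fin k) :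
    |x i| ≤ ‖x‖ := by
  have h1 : ⟪EuclideanSpace.single i (1:ℝ), x⟫ = x i := by
    simp [EuclideanSpace.inner_single_left]
  have h2 := abs_real_inner_le_norm (EuclideanSpace.single i (1:ℝ)) x
  rw [h1, EuclideanSpace.norm_single] at h2
  simpa using h2

theorem stmt10 {m n : ℕ}
    (v : EuclideanSpace ℝ (Fin m)) (hv : ‖v‖ = 1)
    (Θ : Set (EuclideanSpace ℝ (Fin n))) (hΘ : ∀ θ ∈ Θ, ‖θ‖ = 1) :
    ((0 : EuclideanSpace ℝ (Fin n)) ∈ convexHull ℝ (closure Θ) →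
      ∀ A : Matrix (Fin m) (Fin n) ℝ,
        (∀ ε > (0 : ℝ), ∃ θ ∈ closure Θ, ∃ p : EuclideanSpace ℝ (Fin m),
            0 ≤ ⟪v, p⟫ ∧ ‖Matrix.toEuclideanLin A θ - p‖ < ε) ∧
        (∃ θ ∈ closure Θ, 0 ≤ ⟪v, Matrix.toEuclideanLin A θ⟫)) ∧
    ((0 : EuclideanSpace ℝ (Fin n)) ∉ convexHull ℝ (closure Θ) →
      ∃ W : Set (Matrix (Fin m) (Fin n) ℝ), IsOpen W ∧ W.Nonempty ∧
        ∀ A ∈ W, ∃ c > (0 : ℝ), ∀ θ ∈ Θ, ∀ p : EuclideanSpace ℝ (Fin m),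
          0 ≤ ⟪v, p⟫ → c ≤ ‖Matrix.toEuclideanLin A θ - p‖) := by
  have hinner : ∀ (B : Matrix (Fin m) (Fin n) ℝ) (θ : EuclideanSpace ℝ (Fin n)),
      ⟪v, Matrix.toEuclideanLin B θ⟫ = ∑ i, ∑ j, v i * (B i j * θ j) := by
    intro B θ
    simp [PiLp.inner_apply, Matrix.toEuclideanLin, Matrix.mulVec, dotProduct,
      Finset.mul_sum]
    simp [Finset.mul_sum, mul_comm, mul_left_comm]
  constructor
  · intro h0 A
    have key : ∃ θ ∈ closure Θ, 0 ≤ ⟪v, Matrix.toEuclideanLin A θ⟫ := by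
      by_contra hc
      push_neg at hc
      have hlin : IsLinearMap ℝ
          (fun θ : EuclideanSpace ℝ (Fin n) => ⟪v, Matrix.toEuclideanLin A θ⟫) :=
        ⟨fun x y => by rw [map_add, inner_add_right],
         fun c x => by rw [map_smul, real_inner_smul_right, smul_eq_mul]⟩
      have hmem := convexHull_min (fun x hx => hc x hx) (convex_halfSpace_lt hlin 0) h0
      have hcontra : ⟪v, Matrix.toEuclideanLin A (0 : EuclideanSpace ℝ (Fin n))⟫ < 0 := hmem
      rw [map_zero, inner_zero_right] at hcontra
      exact absurd hcontra (lt_irrefl 0)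
    refine ⟨?_, key⟩
    intro ε hε
    obtain ⟨θ, hθ, hpos⟩ := key
    exact ⟨θ, hθ, Matrix.toEuclideanLin A θ, hpos, by simpa using hε⟩
  · intro h0
    classical
    have hsubB : closure Θ ⊆ Metric.closedBall 0 1 := by
      apply closure_minimal _ Metric.isClosed_closedBall
      intro θ hθ'
      simp [Metric.mem_closedBall, dist_zero_right, (hΘ θ hθ').le]
    have hcomp : IsCompact (closure Θ) :=
      (isCompact_closedBall (0 : EuclideanSpace ℝ (Fin n)) 1).of_isClosed_subset
        isClosed_closure hsubB
    have hK : IsCompact (convexHull ℝ (closure Θ)) := isCompact_convexHull_of_isCompact hcomp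
    obtain ⟨f, u, hfu, hu0⟩ :=
      geometric_hahn_banach_closed_point (convex_convexHull ℝ _) hK.isClosed h0
    have hu : u < 0 := by simpa using hu0
    set w : EuclideanSpace ℝ (Fin n) :=
      (InnerProductSpace.toDual ℝ (EuclideanSpace ℝ (Fin n))).symm f with hwdef
    have hfw : ∀ x, ⟪w, x⟫ = f x := fun x => InnerProductSpace.toDual_symm_apply
    set A₀ : Matrix (Fin m) (Fin n) ℝ := fun i j => v i * w j with hA₀
    set g : Matrix (Fin m) (Fin n) ℝ → ℝ := fun A => ∑ i, ∑ j, |A i j - A₀ i j| with hg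
    have hgc : Continuous g := by
      apply continuous_finset_sum
      intro i _
      apply continuous_finset_sum
      intro j _
      exact ((continuous_id.matrix_elem i j).sub continuous_const).abs
    refine ⟨{A | g A < -u / 2}, isOpen_lt hgc continuous_const, ⟨A₀, ?_⟩, ?_⟩
    · simp only [Set.mem_setOf_eq, hg]
      simp only [sub_self, abs_zero, Finset.sum_const_zero]
      linarith
    · intro A hA
      simp only [Set.mem_setOf_eq] at hA
      refine ⟨-u / 2, by linarith, ?_⟩
      intro θ hθΘ p hp
      have hθn : ‖θ‖ = 1 := hΘ θ hθΘ
      -- the main estimate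
      have hvv : ∑ i, v i * v i = 1 := by
        have h1 : ⟪v, v⟫ = ∑ i, v i * v i := by rw [PiLp.inner_apply]; simp [sq]
        have h2 : ⟪v, v⟫ = 1 := by
          rw [real_inner_self_eq_norm_sq, hv]; norm_num
        linarith [h1 ▸ h2]
      have hterm2 : ∑ i, ∑ j, v i * (A₀ i j * θ j) = ⟪w, θ⟫ := by
        have : ∀ i : Fin m, ∀ j : Fin n, v i * (A₀ i j * θ j) = (v i * v i) * (w j * θ j) := by
          intro i j; simp only [hA₀]; ring
        rw [Finset.sum_congr rfl fun i _ => Finset.sum_congr rfl fun j _ => this i j]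
        rw [← Fintype.sum_mul_sum, hvv, one_mul]
        simp [PiLp.inner_apply, mul_comm]
      have hsplit : ⟪v, Matrix.toEuclideanLin A θ⟫ =
          (∑ i, ∑ j, v i * ((A i j - A₀ i j) * θ j)) + ⟪w, θ⟫ := by
        rw [hinner A θ, ← hterm2, ← Finset.sum_add_distrib]
        apply Finset.sum_congr rfl
        intro i _
        rw [← Finset.sum_add_distrib]
        apply Finset.sum_congr rfl
        intro j _
        ring
      have habs : (∑ i, ∑ j, v i * ((A i j - A₀ i j) * θ j)) ≤ g A := by
        refine le_trans (le_abs_self _) (le_trans (Finset.abs_sum_le_sum_abs _ _) ?_)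
        apply Finset.sum_le_sum
        intro i _
        refine le_trans (Finset.abs_sum_le_sum_abs _ _) ?_
        apply Finset.sum_le_sum
        intro j _
        have h1 : |v i| ≤ 1 := hv ▸ coord_abs_le_norm v i
        have h2 : |θ j| ≤ 1 := hθn ▸ coord_abs_le_norm θ j
        rw [abs_mul, abs_mul]
        have h3 : (0:ℝ) ≤ |A i j - A₀ i j| := abs_nonneg _
        have h4 : |A i j - A₀ i j| * |θ j| ≤ |A i j - A₀ i j| * 1 :=
          mul_le_mul_of_nonneg_left h2 h3
        have h5 : |v i| * (|A i j - A₀ i j| * |θ j|) ≤ 1 * (|A i j - A₀ i j| * 1) :=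
          mul_le_mul h1 h4 (by positivity) zero_le_one
        simpa using h5
      have hfθ : ⟪w, θ⟫ < u := by
        rw [hfw]
        exact hfu θ (subset_convexHull ℝ _ (subset_closure hθΘ))
      have hvA : ⟪v, Matrix.toEuclideanLin A θ⟫ ≤ u / 2 := by
        rw [hsplit]; linarith
      have h1 : ⟪v, p - Matrix.toEuclideanLin A θ⟫ ≤ ‖p - Matrix.toEuclideanLin A θ‖ := by
        have := real_inner_le_norm v (p - Matrix.toEuclideanLin A θ)
        rwa [hv, one_mul] at this
      rw [norm_sub_rev, inner_sub_right] at h1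
      linarith
end

section
/- Fix 0 ≤ k ≤ min(n−1, m). Let Φ be a k-dimensional subsphere of S^{n−1} (the intersection of a (k+1)-dimensional linear subspace of ℝ^n with S^{n−1}) and H an (m−k)-dimensional linear subspace of ℝ^m. Then the set W of matrices A ∈ M_{m,n} for which there exists a pair (p, θ) ∈ H × Φ with Aθ = p, and this pair is unique up to simultaneous sign change, is open and dense in M_{m,n}. In particular, the union of the affine subspaces L_{p,θ} = { A : Aθ = p } over (p, θ) ∈ H × Φ is dense in M_{m,n}. -/
set_option maxHeartbeats 1000000

open Module Matrix

/-- A matrix `M` with `a` rows has full row rank iff `det (M * Mᵀ) ≠ 0`. -/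
lemma aux_det_mul_transpose_ne_zero_iff {a b : ℕ} (M : Matrix (Fin a) (Fin b) ℝ) :
    (M * Mᵀ).det ≠ 0 ↔ M.rank = a := by
  constructor
  · intro h
    have hu : IsUnit (M * Mᵀ) := (Matrix.isUnit_iff_isUnit_det _).2 (isUnit_iff_ne_zero.2 h)
    have := Matrix.rank_of_isUnit _ hu
    rw [Matrix.rank_self_mul_transpose] at this
    simpa using this
  · intro h
    have h2 : (M * Mᵀ).rank = a := by rw [Matrix.rank_self_mul_transpose, h]
    have hr : LinearMap.range (M * Mᵀ).mulVecLin = ⊤ := by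
      apply Submodule.eq_top_of_finrank_eq
      rw [show finrank ℝ (LinearMap.range (M * Mᵀ).mulVecLin) = (M * Mᵀ).rank from rfl, h2]
      simp [Module.finrank_fintype_fun_eq_card]
    have hs : Function.Surjective (M * Mᵀ).mulVec := by
      intro y
      obtain ⟨x, hx⟩ := LinearMap.range_eq_top.1 hr y
      exact ⟨x, hx⟩
    have := (Matrix.isUnit_iff_isUnit_det _).1 (Matrix.mulVec_surjective_iff_isUnit.1 hs)
    exact this.ne_zero

theorem stmt13 {m n k : ℕ} (hk : k ≤ min (n - 1) m)
    (F : Submodule ℝ (EuclideanSpace ℝ (Fin n)))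
    (hF : Module.finrank ℝ F = k + 1)
    (H : Submodule ℝ (EuclideanSpace ℝ (Fin m)))
    (hH : Module.finrank ℝ H = m - k) :
    IsOpen {A : Matrix (Fin m) (Fin n) ℝ |
        (∃ p θ, p ∈ H ∧ θ ∈ F ∧ ‖θ‖ = 1 ∧ Matrix.toEuclideanLin A θ = p) ∧
        ∀ p θ p' θ', p ∈ H → θ ∈ F → ‖θ‖ = 1 → Matrix.toEuclideanLin A θ = p →
          p' ∈ H → θ' ∈ F → ‖θ'‖ = 1 → Matrix.toEuclideanLin A θ' = p' →
          (p' = p ∧ θ' = θ) ∨ (p' = -p ∧ θ' = -θ)} ∧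
    Dense {A : Matrix (Fin m) (Fin n) ℝ |
        (∃ p θ, p ∈ H ∧ θ ∈ F ∧ ‖θ‖ = 1 ∧ Matrix.toEuclideanLin A θ = p) ∧
        ∀ p θ p' θ', p ∈ H → θ ∈ F → ‖θ‖ = 1 → Matrix.toEuclideanLin A θ = p →
          p' ∈ H → θ' ∈ F → ‖θ'‖ = 1 → Matrix.toEuclideanLin A θ' = p' →
          (p' = p ∧ θ' = θ) ∨ (p' = -p ∧ θ' = -θ)} ∧
    Dense {A : Matrix (Fin m) (Fin n) ℝ |
        ∃ p θ, p ∈ H ∧ θ ∈ F ∧ ‖θ‖ = 1 ∧ Matrix.toEuclideanLin A θ = p} := by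
  classical
  have hkm : k ≤ m := le_trans hk (min_le_right _ _)
  set V : Submodule ℝ (EuclideanSpace ℝ (Fin m)) := Hᗮ with hVdef
  have hV : finrank ℝ V = k := by
    have h1 := Submodule.finrank_add_finrank_orthogonal H
    rw [hH, finrank_euclideanSpace_fin] at h1
    rw [← hVdef] at h1
    omega
  -- The fundamental linear map Ψ : A ↦ (orthogonal projection to V) ∘ A ∘ (inclusion of F)
  set Ψ : Matrix (Fin m) (Fin n) ℝ →ₗ[ℝ] (F →ₗ[ℝ] V) :=
    { toFun := fun A =>
        ((Submodule.orthogonalProjectionOnto V).toLinearMap.comp (Matrix.toEuclideanLin A)).comp F.subtype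
      map_add' := by
        intro A B; ext x; simp
      map_smul' := by
        intro c A; ext x; simp } with hΨdef
  have hΨapp : ∀ (A : Matrix (Fin m) (Fin n) ℝ) (x : F),
      Ψ A x = Submodule.orthogonalProjectionOnto V (Matrix.toEuclideanLin A x) := fun A x => rfl
  have hΨ0 : ∀ (A : Matrix (Fin m) (Fin n) ℝ) (x : F),
      Ψ A x = 0 ↔ Matrix.toEuclideanLin A x ∈ H := by
    intro A x
    rw [hΨapp, Submodule.orthogonalProjectionOnto_eq_zero_iff, hVdef, Submodule.orthogonal_orthogonal]
  have hrn : ∀ A : Matrix (Fin m) (Fin n) ℝ,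
      finrank ℝ (LinearMap.range (Ψ A)) + finrank ℝ (LinearMap.ker (Ψ A)) = k + 1 := by
    intro A
    rw [LinearMap.finrank_range_add_finrank_ker, hF]
  -- existence of a kernel vector
  have hexist : ∀ A : Matrix (Fin m) (Fin n) ℝ, ∃ x : F, x ∈ LinearMap.ker (Ψ A) ∧ x ≠ 0 := by
    intro A
    have hle : finrank ℝ (LinearMap.range (Ψ A)) ≤ k := hV ▸ Submodule.finrank_le _
    have hker : LinearMap.ker (Ψ A) ≠ ⊥ := by
      intro hbot
      have := hrn A
      rw [hbot, finrank_bot] at this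
      omega
    exact Submodule.exists_mem_ne_zero_of_ne_bot hker
  -- existence of pair (p, θ)
  have hex : ∀ A : Matrix (Fin m) (Fin n) ℝ,
      ∃ p θ, p ∈ H ∧ θ ∈ F ∧ ‖θ‖ = 1 ∧ Matrix.toEuclideanLin A θ = p := by
    intro A
    obtain ⟨x, hxk, hx0⟩ := hexist A
    have hxH : Matrix.toEuclideanLin A (x : EuclideanSpace ℝ (Fin n)) ∈ H :=
      (hΨ0 A x).1 hxk
    have hx0' : (x : EuclideanSpace ℝ (Fin n)) ≠ 0 := by
      simpa [Submodule.coe_eq_zero] using hx0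
    refine ⟨Matrix.toEuclideanLin A ((‖(x : EuclideanSpace ℝ (Fin n))‖⁻¹ : ℝ) • (x : EuclideanSpace ℝ (Fin n))),
      (‖(x : EuclideanSpace ℝ (Fin n))‖⁻¹ : ℝ) • (x : EuclideanSpace ℝ (Fin n)), ?_, ?_, ?_, rfl⟩
    · rw [_root_.map_smul]; exact H.smul_mem _ hxH
    · exact F.smul_mem _ x.2
    · exact norm_smul_inv_norm hx0'
  -- uniqueness characterization
  have hchar : ∀ A : Matrix (Fin m) (Fin n) ℝ,
      ((∃ p θ, p ∈ H ∧ θ ∈ F ∧ ‖θ‖ = 1 ∧ Matrix.toEuclideanLin A θ = p) ∧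
        ∀ p θ p' θ', p ∈ H → θ ∈ F → ‖θ‖ = 1 → Matrix.toEuclideanLin A θ = p →
          p' ∈ H → θ' ∈ F → ‖θ'‖ = 1 → Matrix.toEuclideanLin A θ' = p' →
          (p' = p ∧ θ' = θ) ∨ (p' = -p ∧ θ' = -θ)) ↔ Function.Surjective (Ψ A) := by
    intro A
    constructor
    · -- uniqueness → surjective
      rintro ⟨-, huniq⟩
      by_contra hns
      have hrlt : finrank ℝ (LinearMap.range (Ψ A)) < k := by
        have : LinearMap.range (Ψ A) < ⊤ := lt_top_iff_ne_top.2 (by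
          intro htop
          exact hns (LinearMap.range_eq_top.1 htop))
        have := Submodule.finrank_lt (K := ℝ) (V := V) this.ne
        omega
      have hker2 : 2 ≤ finrank ℝ (LinearMap.ker (Ψ A)) := by
        have := hrn A; omega
      obtain ⟨u, huk, hu0⟩ := hexist A
      have huspan : (Submodule.span ℝ {u}) ≤ LinearMap.ker (Ψ A) := by
        rw [Submodule.span_le, Set.singleton_subset_iff]; exact huk
      obtain ⟨w, hwk, hwspan⟩ : ∃ w : F, w ∈ LinearMap.ker (Ψ A) ∧ w ∉ Submodule.span ℝ {u} := by
        by_contra hcon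
        push_neg at hcon
        have hle : LinearMap.ker (Ψ A) ≤ Submodule.span ℝ {u} := fun w hw => hcon w hw
        have := Submodule.finrank_mono hle
        rw [finrank_span_singleton hu0] at this
        omega
      have hw0 : w ≠ 0 := by rintro rfl; exact hwspan (Submodule.zero_mem _)
      have hu0' : (u : EuclideanSpace ℝ (Fin n)) ≠ 0 := by simpa [Submodule.coe_eq_zero] using hu0
      have hw0' : (w : EuclideanSpace ℝ (Fin n)) ≠ 0 := by simpa [Submodule.coe_eq_zero] using hw0
      set θ₁ : EuclideanSpace ℝ (Fin n) := (‖(u : EuclideanSpace ℝ (Fin n))‖⁻¹ : ℝ) • u with hθ₁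
      set θ₂ : EuclideanSpace ℝ (Fin n) := (‖(w : EuclideanSpace ℝ (Fin n))‖⁻¹ : ℝ) • w with hθ₂
      have huH : Matrix.toEuclideanLin A (u : EuclideanSpace ℝ (Fin n)) ∈ H := (hΨ0 A u).1 huk
      have hwH : Matrix.toEuclideanLin A (w : EuclideanSpace ℝ (Fin n)) ∈ H := (hΨ0 A w).1 hwk
      have h1H : Matrix.toEuclideanLin A θ₁ ∈ H := by rw [hθ₁, _root_.map_smul]; exact H.smul_mem _ huH
      have h2H : Matrix.toEuclideanLin A θ₂ ∈ H := by rw [hθ₂, _root_.map_smul]; exact H.smul_mem _ hwH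
      have h1F : θ₁ ∈ F := F.smul_mem _ u.2
      have h2F : θ₂ ∈ F := F.smul_mem _ w.2
      have h1n : ‖θ₁‖ = 1 := norm_smul_inv_norm hu0'
      have h2n : ‖θ₂‖ = 1 := norm_smul_inv_norm hw0'
      have := huniq (Matrix.toEuclideanLin A θ₁) θ₁ (Matrix.toEuclideanLin A θ₂) θ₂
        h1H h1F h1n rfl h2H h2F h2n rfl
      have hwmem : w ∈ Submodule.span ℝ ({u} : Set F) := by
        have h3 : (‖(w : EuclideanSpace ℝ (Fin n))‖ : ℝ) • θ₂ = (w : EuclideanSpace ℝ (Fin n)) := by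
          rw [hθ₂, smul_smul, mul_inv_cancel₀ (norm_ne_zero_iff.2 hw0'), one_smul]
        rcases this with ⟨-, h2⟩ | ⟨-, h2⟩
        · rw [Submodule.mem_span_singleton]
          refine ⟨‖(w : EuclideanSpace ℝ (Fin n))‖ * ‖(u : EuclideanSpace ℝ (Fin n))‖⁻¹, ?_⟩
          have hco : (w : EuclideanSpace ℝ (Fin n)) =
              (‖(w : EuclideanSpace ℝ (Fin n))‖ * ‖(u : EuclideanSpace ℝ (Fin n))‖⁻¹) • u :=
            calc (w : EuclideanSpace ℝ (Fin n)) = (‖(w : EuclideanSpace ℝ (Fin n))‖ : ℝ) • θ₂ := h3.symm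
              _ = (‖(w : EuclideanSpace ℝ (Fin n))‖ : ℝ) • θ₁ := by rw [h2]
              _ = (‖(w : EuclideanSpace ℝ (Fin n))‖ * ‖(u : EuclideanSpace ℝ (Fin n))‖⁻¹) • u := by
                  rw [hθ₁, smul_smul]
          apply Subtype.coe_injective
          simp only [Submodule.coe_smul]
          exact hco.symm
        · rw [Submodule.mem_span_singleton]
          refine ⟨-(‖(w : EuclideanSpace ℝ (Fin n))‖ * ‖(u : EuclideanSpace ℝ (Fin n))‖⁻¹), ?_⟩
          have hco : (w : EuclideanSpace ℝ (Fin n)) =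
              (-(‖(w : EuclideanSpace ℝ (Fin n))‖ * ‖(u : EuclideanSpace ℝ (Fin n))‖⁻¹)) • u :=
            calc (w : EuclideanSpace ℝ (Fin n)) = (‖(w : EuclideanSpace ℝ (Fin n))‖ : ℝ) • θ₂ := h3.symm
              _ = (‖(w : EuclideanSpace ℝ (Fin n))‖ : ℝ) • (-θ₁) := by rw [h2]
              _ = (-(‖(w : EuclideanSpace ℝ (Fin n))‖ * ‖(u : EuclideanSpace ℝ (Fin n))‖⁻¹)) • u := by
                  rw [hθ₁, smul_neg, smul_smul, ← neg_smul]
          apply Subtype.coe_injective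
          simp only [Submodule.coe_smul]
          exact hco.symm
      exact hwspan hwmem
    · -- surjective → uniqueness
      intro hsurj
      refine ⟨hex A, ?_⟩
      have hker1 : finrank ℝ (LinearMap.ker (Ψ A)) = 1 := by
        have hrtop : LinearMap.range (Ψ A) = ⊤ := LinearMap.range_eq_top.2 hsurj
        have : finrank ℝ (LinearMap.range (Ψ A)) = k := by rw [hrtop]; simpa [finrank_top] using hV
        have := hrn A; omega
      obtain ⟨v, hv0, hv⟩ := finrank_eq_one_iff'.1 hker1
      intro p θ p' θ' hpH hθF hθ1 hAθ hp'H hθ'F hθ'1 hAθ'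
      have hmem : (⟨θ, hθF⟩ : F) ∈ LinearMap.ker (Ψ A) := by
        rw [LinearMap.mem_ker, hΨ0]; rw [show ((⟨θ, hθF⟩ : F) : EuclideanSpace ℝ (Fin n)) = θ from rfl, hAθ]; exact hpH
      have hmem' : (⟨θ', hθ'F⟩ : F) ∈ LinearMap.ker (Ψ A) := by
        rw [LinearMap.mem_ker, hΨ0]; rw [show ((⟨θ', hθ'F⟩ : F) : EuclideanSpace ℝ (Fin n)) = θ' from rfl, hAθ']; exact hp'H
      obtain ⟨a, ha⟩ := hv ⟨⟨θ, hθF⟩, hmem⟩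
      obtain ⟨b, hb⟩ := hv ⟨⟨θ', hθ'F⟩, hmem'⟩
      set ω : EuclideanSpace ℝ (Fin n) := (((v : F) : EuclideanSpace ℝ (Fin n))) with hω
      have hωa : a • ω = θ := by
        have := congrArg (fun z : LinearMap.ker (Ψ A) => ((z : F) : EuclideanSpace ℝ (Fin n))) ha
        simpa using this
      have hωb : b • ω = θ' := by
        have := congrArg (fun z : LinearMap.ker (Ψ A) => ((z : F) : EuclideanSpace ℝ (Fin n))) hb
        simpa using this
      have hω0 : ω ≠ 0 := by
        simp only [hω]
        intro hc
        apply hv0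
        apply Subtype.coe_injective
        apply Subtype.coe_injective
        simpa using hc
      have hna : |a| * ‖ω‖ = 1 := by
        have : ‖a • ω‖ = 1 := by rw [hωa]; exact hθ1
        rwa [norm_smul, Real.norm_eq_abs] at this
      have hnb : |b| * ‖ω‖ = 1 := by
        have : ‖b • ω‖ = 1 := by rw [hωb]; exact hθ'1
        rwa [norm_smul, Real.norm_eq_abs] at this
      have hωn : ‖ω‖ ≠ 0 := norm_ne_zero_iff.2 hω0
      have hab : |a| = |b| := by
        have : |a| * ‖ω‖ = |b| * ‖ω‖ := by rw [hna, hnb]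
        exact mul_right_cancel₀ hωn this
      rcases abs_eq_abs.1 hab with hba | hba
      · left
        have hθθ : θ' = θ := by rw [← hωa, ← hωb, ← hba]
        exact ⟨by rw [← hAθ, ← hAθ', hθθ], hθθ⟩
      · right
        have hθθ : θ' = -θ := by rw [← hωa, ← hωb, hba, neg_smul, neg_neg]
        refine ⟨?_, hθθ⟩
        rw [← hAθ, ← hAθ', hθθ, map_neg]
  -- bases and matrix representation
  let bF : Basis (Fin (k+1)) ℝ F := Module.finBasisOfFinrankEq ℝ F hF
  let bV : Basis (Fin k) ℝ V := Module.finBasisOfFinrankEq ℝ V hV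
  let gL : Matrix (Fin m) (Fin n) ℝ →ₗ[ℝ] Matrix (Fin k) (Fin (k+1)) ℝ :=
    (LinearMap.toMatrix bF bV).toLinearMap.comp Ψ
  have hgL : ∀ A, LinearMap.toMatrix bF bV (Ψ A) = gL A := fun A => rfl
  have hSurjChar : ∀ A : Matrix (Fin m) (Fin n) ℝ,
      Function.Surjective (Ψ A) ↔ ((gL A) * (gL A)ᵀ).det ≠ 0 := by
    intro A
    rw [aux_det_mul_transpose_ne_zero_iff]
    have hrank : (gL A).rank = finrank ℝ (LinearMap.range (Ψ A)) := by
      have := Matrix.rank_eq_finrank_range_toLin (gL A) bV bF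
      rwa [← hgL, Matrix.toLin_toMatrix] at this
    constructor
    · intro hs
      rw [hrank, LinearMap.range_eq_top.2 hs]
      simpa [finrank_top] using hV
    · intro hr
      apply LinearMap.range_eq_top.1
      apply Submodule.eq_top_of_finrank_eq
      rw [← hrank, hr, hV]
  set detf : Matrix (Fin m) (Fin n) ℝ → ℝ := fun A => ((gL A) * (gL A)ᵀ).det with hdetf
  have hcont : Continuous detf := by
    have hg : Continuous fun A => gL A := gL.continuous_of_finiteDimensional
    exact (hg.matrix_mul hg.matrix_transpose).matrix_det
  have hOpen : IsOpen {A : Matrix (Fin m) (Fin n) ℝ | detf A ≠ 0} :=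
    IsOpen.preimage hcont isOpen_compl_singleton
  -- a matrix C with Ψ C surjective
  let L₀ : F →ₗ[ℝ] V :=
    (bV.equivFun.symm.toLinearMap.comp
      ((LinearMap.funLeft ℝ ℝ (Fin.castSucc)).comp bF.equivFun.toLinearMap))
  have hL₀ : Function.Surjective L₀ := by
    have h1 := LinearMap.funLeft_surjective_of_injective ℝ ℝ _ (Fin.castSucc_injective k)
    simp only [L₀, LinearMap.coe_comp, LinearEquiv.coe_coe]
    exact bV.equivFun.symm.surjective.comp (h1.comp bF.equivFun.surjective)
  let C : Matrix (Fin m) (Fin n) ℝ :=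
    Matrix.toEuclideanLin.symm ((V.subtype.comp L₀).comp (Submodule.orthogonalProjectionOnto F).toLinearMap)
  have hΨC : Ψ C = L₀ := by
    ext x
    have hCC : Matrix.toEuclideanLin C =
        (V.subtype.comp L₀).comp (Submodule.orthogonalProjectionOnto F).toLinearMap :=
      LinearEquiv.apply_symm_apply _ _
    rw [hΨapp, hCC]
    simp [Submodule.orthogonalProjectionOnto_mem_subspace_eq_self]
  have hCd : detf C ≠ 0 := (hSurjChar C).1 (by rw [hΨC]; exact hL₀)
  -- density via polynomial perturbation
  have hDense : Dense {A : Matrix (Fin m) (Fin n) ℝ | detf A ≠ 0} := by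
    intro A
    let P : Matrix (Fin k) (Fin (k+1)) (Polynomial ℝ) :=
      Matrix.of fun i j => Polynomial.C (gL C i j) + Polynomial.X * Polynomial.C (gL A i j)
    let q : Polynomial ℝ := (P * Pᵀ).det
    have hPmap : ∀ t : ℝ, P.map (Polynomial.eval t) = gL C + t • gL A := by
      intro t; ext i j
      simp only [P, Matrix.map_apply, Matrix.of_apply, Matrix.add_apply, Matrix.smul_apply,
        Polynomial.eval_add, Polynomial.eval_C, Polynomial.eval_mul, Polynomial.eval_X,
        smul_eq_mul]
    have hgLadd : ∀ t : ℝ, gL (C + t • A) = gL C + t • gL A := by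
      intro t; rw [map_add, LinearMap.map_smul]
    have heval : ∀ t : ℝ, q.eval t = detf (C + t • A) := by
      intro t
      have h1 : q.eval t = ((P * Pᵀ).map (Polynomial.eval t)).det := by
        have := RingHom.map_det (Polynomial.evalRingHom t) (P * Pᵀ)
        simpa only [RingHom.mapMatrix_apply, Polynomial.coe_evalRingHom] using this
      rw [h1, ← Polynomial.coe_evalRingHom, Matrix.map_mul (f := Polynomial.evalRingHom t),
        Matrix.transpose_map, Polynomial.coe_evalRingHom, hPmap]
      simp only [hdetf, hgLadd]
    have hq0 : q ≠ 0 := by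
      intro h
      apply hCd
      have h0 := heval 0
      rw [h] at h0
      simpa using h0.symm
    have hT : {t : ℝ | q.IsRoot t}.Finite := Polynomial.finite_setOf_isRoot hq0
    let Bad : Set ℝ := {s : ℝ | s ≠ 0 ∧ q.eval s⁻¹ = 0}
    have hBadFin : Bad.Finite := by
      apply Set.Finite.subset (hT.image fun r => r⁻¹)
      rintro s ⟨hs0, hs⟩
      exact ⟨s⁻¹, hs, inv_inv s⟩
    have hBad0 : (0:ℝ) ∉ Bad := fun h => h.1 rfl
    have hev1 : ∀ᶠ s in nhdsWithin (0:ℝ) {0}ᶜ, s ∉ Bad := by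
      apply Filter.Eventually.filter_mono nhdsWithin_le_nhds
      have hmem : Badᶜ ∈ nhds (0:ℝ) := hBadFin.isClosed.isOpen_compl.mem_nhds hBad0
      exact Filter.eventually_of_mem hmem fun x hx => hx
    have hev2 : ∀ᶠ s in nhdsWithin (0:ℝ) {0}ᶜ, s ≠ 0 := by
      have := eventually_mem_nhdsWithin (a := (0:ℝ)) (s := {0}ᶜ)
      exact this.mono fun x hx => hx
    have htend : Filter.Tendsto (fun s : ℝ => A + s • C) (nhdsWithin (0:ℝ) {0}ᶜ) (nhds A) := by
      have hco : Continuous fun s : ℝ => A + s • C :=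
        continuous_const.add (continuous_id.smul continuous_const)
      have h0 := hco.tendsto 0
      simp only [zero_smul, add_zero] at h0
      exact h0.mono_left nhdsWithin_le_nhds
    apply mem_closure_of_tendsto htend
    filter_upwards [hev1, hev2] with s hs1 hs2
    have hqs : q.eval s⁻¹ ≠ 0 := fun h => hs1 ⟨hs2, h⟩
    have hsurj1 : Function.Surjective (Ψ (C + s⁻¹ • A)) :=
      (hSurjChar _).2 (by show detf (C + s⁻¹ • A) ≠ 0; rw [← heval]; exact hqs)
    have hkey : A + s • C = s • (C + s⁻¹ • A) := by
      rw [smul_add, smul_smul, mul_inv_cancel₀ hs2, one_smul, add_comm]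
    have hsurj2 : Function.Surjective (Ψ (A + s • C)) := by
      rw [hkey, LinearMap.map_smul]
      intro y
      obtain ⟨x, hx⟩ := hsurj1 (s⁻¹ • y)
      exact ⟨x, by rw [LinearMap.smul_apply, hx, smul_smul, mul_inv_cancel₀ hs2, one_smul]⟩
    exact (hSurjChar _).1 hsurj2
  -- conclude
  have hset1 : {A : Matrix (Fin m) (Fin n) ℝ |
      (∃ p θ, p ∈ H ∧ θ ∈ F ∧ ‖θ‖ = 1 ∧ Matrix.toEuclideanLin A θ = p) ∧
        ∀ p θ p' θ', p ∈ H → θ ∈ F → ‖θ‖ = 1 → Matrix.toEuclideanLin A θ = p →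
          p' ∈ H → θ' ∈ F → ‖θ'‖ = 1 → Matrix.toEuclideanLin A θ' = p' →
          (p' = p ∧ θ' = θ) ∨ (p' = -p ∧ θ' = -θ)} =
      {A : Matrix (Fin m) (Fin n) ℝ | detf A ≠ 0} :=
    Set.ext fun A => (hchar A).trans (hSurjChar A)
  have hset3 : {A : Matrix (Fin m) (Fin n) ℝ |
      ∃ p θ, p ∈ H ∧ θ ∈ F ∧ ‖θ‖ = 1 ∧ Matrix.toEuclideanLin A θ = p} = Set.univ :=
    Set.eq_univ_of_forall hex
  refine ⟨?_, ?_, ?_⟩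
  · rw [hset1]; exact hOpen
  · rw [hset1]; exact hDense
  · rw [hset3]; exact dense_univ
end
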